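/- arXiv:1505.07402 — 4 statements merged into one kernel-verified Lean document; each statement's English description precedes it below -/
import Mathlib

section
/- Under Assumptions 1 and 2, the origin of the reduced closed-loop system x' = A x is globally asymptotically stable: every solution x : ℝ → ℝ^{3n+(n−1)} of the linear ODE x'(t) = A x(t) converges to 0 as t → ∞. (Theorem 1 of the paper.) -/
open Matrix Filter

/-- Index type for the state `(ω̂, V̂, η, φ'')` of dimension `3n + (n-1)`. -/
abbrev Idx (n : ℕ) := (Fin n ⊕ Fin n) ⊕ (Fin n ⊕ Fin (n - 1))

/-- A connected-graph Laplacian: symmetric positive semidefinite, `L 1 = 0`,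
and the kernel is exactly the span of the all-ones vector. -/
def IsConnLaplacian {n : ℕ} (L : Matrix (Fin n) (Fin n) ℝ) : Prop :=
  L.PosSemidef ∧ L *ᵥ (fun _ => (1 : ℝ)) = 0 ∧
    ∀ v : Fin n → ℝ, L *ᵥ v = 0 → ∃ c : ℝ, v = fun _ => c

/-- The closed-loop system matrix `A` of the reduced dynamics
`(ω̂, V̂, η, φ'')`. -/
noncomputable def closedLoopA {n : ℕ}
    (M E Kw KV Kd KdI LR Leta Lphi : Matrix (Fin n) (Fin n) ℝ)
    (S : Matrix (Fin n) (Fin (n - 1)) ℝ) (Vnom γ : ℝ) :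
    Matrix (Idx n) (Idx n) ℝ :=
  Matrix.fromBlocks
    (Matrix.fromBlocks
      (-(M * (Kd + Kw))) (M * KV)
      ((1 / Vnom) • (E * Kw)) (-(E * (LR + (1 / Vnom) • KV))))
    (Matrix.fromBlocks
      (-(M * (KV * Kw⁻¹ * KdI))) (-(M * (Lphi * S)))
      0 ((1 / Vnom) • (E * (Lphi * S))))
    (Matrix.fromBlocks
      KdI 0
      (Sᵀ * KV⁻¹ * Kw) 0)
    (Matrix.fromBlocks
      (-Leta) 0
      0 (-(γ • (1 : Matrix (Fin (n - 1)) (Fin (n - 1)) ℝ))))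

/-!
The block-diagonal form `energyMatrix` (weights `kω/(kV m)` on `ω̂`, `Vnom/E` on `V̂`, the identity
on `η`, and `Sᵀ L_φ S` on `φ''`) is a Lyapunov function. Along `ẋ = A x` the integral-action terms
cancel, and by Assumption 1 and `S Sᵀ z = z` for `z ⊥ 1` so do the `ω̂`–`φ''` terms. What remains
is minus a damping term in `(ω̂, V̂)`, the form of `L_η` in `η`, and a form in `(V̂, S φ'')` that is
positive semidefinite by Assumption 2; so the derivative vanishes only where `ω̂ = V̂ = φ'' = 0`.
There the derivative of the cross term `2 ω̂ ⬝ η` is `-2 ∑ mᵢ kVᵢ kdIᵢ ηᵢ² / kωᵢ < 0`. By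
compactness of the unit sphere, adding a small multiple of the cross term gives a strict quadratic
Lyapunov function, so solutions decay exponentially.
-/

open Topology

section QuadraticForm

variable {ι : Type*} [Fintype ι]

theorem continuous_dotProduct_mulVec (Q : Matrix ι ι ℝ) :
    Continuous fun y : ι → ℝ => y ⬝ᵥ (Q *ᵥ y) :=
  continuous_id.dotProduct (continuous_const.matrix_mulVec continuous_id)

theorem smul_dotProduct_mulVec_smul (Q : Matrix ι ι ℝ) (c : ℝ) (y : ι → ℝ) :
    (c • y) ⬝ᵥ (Q *ᵥ (c • y)) = c ^ 2 * (y ⬝ᵥ (Q *ᵥ y)) := by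
  rw [mulVec_smul, dotProduct_smul, smul_dotProduct, smul_eq_mul, smul_eq_mul]
  ring

theorem dotProduct_mulVec_le_of_forall_sphere {Q : Matrix ι ι ℝ} {a : ℝ}
    (h : ∀ u ∈ Metric.sphere (0 : ι → ℝ) 1, u ⬝ᵥ (Q *ᵥ u) ≤ a) (y : ι → ℝ) :
    y ⬝ᵥ (Q *ᵥ y) ≤ a * ‖y‖ ^ 2 := by
  rcases eq_or_ne y 0 with rfl | hy
  · simp
  have hu : ‖y‖⁻¹ • y ∈ Metric.sphere (0 : ι → ℝ) 1 := by
    simp [norm_smul, inv_mul_cancel₀ (norm_ne_zero_iff.2 hy)]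
  have hyu : y = ‖y‖ • ‖y‖⁻¹ • y := by
    rw [smul_smul, mul_inv_cancel₀ (norm_ne_zero_iff.2 hy), one_smul]
  rw [hyu, smul_dotProduct_mulVec_smul, ← hyu, mul_comm]
  exact mul_le_mul_of_nonneg_right (h _ hu) (by positivity)

theorem exists_dotProduct_mulVec_le (Q : Matrix ι ι ℝ) :
    ∃ C > 0, ∀ y, y ⬝ᵥ (Q *ᵥ y) ≤ C * ‖y‖ ^ 2 := by
  obtain ⟨b, hb⟩ := (isCompact_sphere (0 : ι → ℝ) 1).exists_bound_of_continuousOn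
    (continuous_dotProduct_mulVec Q).continuousOn
  refine ⟨max b 1, by positivity, dotProduct_mulVec_le_of_forall_sphere fun u hu => ?_⟩
  exact (le_abs_self _).trans ((hb u hu).trans (le_max_left _ _))

/-- A Finsler-type lemma. On the compact part of the unit sphere where `R ≥ 0`, the form of `Q`
is bounded away from `0`; elsewhere on the sphere both forms are `≤ 0` and the one of `R` is
`< 0`. -/
theorem eventually_dotProduct_add_smul_mulVec_le {Q R : Matrix ι ι ℝ}
    (hQ : ∀ y, y ⬝ᵥ (Q *ᵥ y) ≤ 0)
    (hR : ∀ y ≠ 0, y ⬝ᵥ (Q *ᵥ y) = 0 → y ⬝ᵥ (R *ᵥ y) < 0) :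
    ∀ᶠ ε : ℝ in 𝓝[>] 0, ∃ δ > 0, ∀ y, y ⬝ᵥ ((Q + ε • R) *ᵥ y) ≤ -δ * ‖y‖ ^ 2 := by
  set sphere := Metric.sphere (0 : ι → ℝ) 1
  have hsphere : IsCompact sphere := isCompact_sphere 0 1
  have hne : ∀ y ∈ sphere, y ≠ 0 := fun y hy => ne_zero_of_mem_unit_sphere ⟨y, hy⟩
  obtain ⟨a, ha, hQa⟩ :
      ∃ a > 0, ∀ y ∈ sphere ∩ {y | 0 ≤ y ⬝ᵥ (R *ᵥ y)}, a ≤ -(y ⬝ᵥ (Q *ᵥ y)) :=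
    (hsphere.inter_right (isClosed_le continuous_const (continuous_dotProduct_mulVec R))
      ).exists_forall_le' (continuous_dotProduct_mulVec Q).neg.continuousOn
      fun y ⟨hy, hRy⟩ => neg_pos.2 <| (hQ y).lt_of_ne fun h => (hR y (hne y hy) h).not_ge hRy
  obtain ⟨b, hb⟩ :=
    hsphere.exists_bound_of_continuousOn (continuous_dotProduct_mulVec R).continuousOn
  have hsmall : ∀ᶠ ε in 𝓝[>] (0 : ℝ), ε * b < a :=
    nhdsWithin_le_nhds <| ((continuous_mul_const b).tendsto' 0 0 (zero_mul b)).eventually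
      (gt_mem_nhds ha)
  filter_upwards [hsmall, self_mem_nhdsWithin] with ε hεb (hε : 0 < ε)
  have hsplit : ∀ y : ι → ℝ,
      y ⬝ᵥ ((Q + ε • R) *ᵥ y) = y ⬝ᵥ (Q *ᵥ y) + ε * (y ⬝ᵥ (R *ᵥ y)) := fun y => by
    rw [add_mulVec, smul_mulVec, dotProduct_add, dotProduct_smul, smul_eq_mul]
  have hneg : ∀ y ∈ sphere, 0 < -(y ⬝ᵥ ((Q + ε • R) *ᵥ y)) := by
    intro y hy
    rw [hsplit, neg_pos]
    rcases lt_or_ge (y ⬝ᵥ (R *ᵥ y)) 0 with hRy | hRy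
    · nlinarith [hQ y]
    · have := hQa y ⟨hy, hRy⟩
      have : y ⬝ᵥ (R *ᵥ y) ≤ b := (le_abs_self _).trans (hb y hy)
      nlinarith
  obtain ⟨δ, hδ, hδle⟩ := hsphere.exists_forall_le' (f := fun y => -(y ⬝ᵥ ((Q + ε • R) *ᵥ y)))
    (continuous_dotProduct_mulVec _).neg.continuousOn hneg
  exact ⟨δ, hδ, dotProduct_mulVec_le_of_forall_sphere fun u hu => by linarith [hδle u hu]⟩

theorem eventually_le_dotProduct_add_smul_mulVec {P R : Matrix ι ι ℝ}
    (hP : ∀ y ≠ 0, 0 < y ⬝ᵥ (P *ᵥ y)) :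
    ∀ᶠ ε : ℝ in 𝓝[>] 0, ∃ c > 0, ∀ y, c * ‖y‖ ^ 2 ≤ y ⬝ᵥ ((P + ε • R) *ᵥ y) := by
  have hnegP : ∀ y, y ⬝ᵥ ((-P) *ᵥ y) ≤ 0 := fun y => by
    rcases eq_or_ne y 0 with rfl | hy
    · simp
    · simpa [neg_mulVec] using (hP y hy).le
  filter_upwards [eventually_dotProduct_add_smul_mulVec_le (R := -R) hnegP
    fun y hy h => absurd (by simpa [neg_mulVec] using h) (hP y hy).ne'] with ε ⟨c, hc, h⟩
  refine ⟨c, hc, fun y => ?_⟩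
  have := h y
  rw [smul_neg, ← neg_add, neg_mulVec, dotProduct_neg] at this
  linarith

theorem dotProduct_transpose_mul_add_mul_mulVec (A P : Matrix ι ι ℝ) (y : ι → ℝ) :
    y ⬝ᵥ ((Aᵀ * P + P * A) *ᵥ y) = (A *ᵥ y) ⬝ᵥ (P *ᵥ y) + y ⬝ᵥ (P *ᵥ (A *ᵥ y)) := by
  rw [add_mulVec, dotProduct_add, ← mulVec_mulVec, ← mulVec_mulVec, dotProduct_mulVec y Aᵀ,
    vecMul_transpose]

theorem dotProduct_transpose_mul_add_mul_mulVec_of_transpose_eq {A P : Matrix ι ι ℝ}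
    (hP : Pᵀ = P) (y : ι → ℝ) :
    y ⬝ᵥ ((Aᵀ * P + P * A) *ᵥ y) = 2 * (y ⬝ᵥ (P *ᵥ (A *ᵥ y))) := by
  rw [dotProduct_transpose_mul_add_mul_mulVec, dotProduct_mulVec y P, ← mulVec_transpose, hP,
    dotProduct_comm]
  ring

theorem hasDerivAt_dotProduct_mulVec (P : Matrix ι ι ℝ) {x : ℝ → ι → ℝ} {x' : ι → ℝ} {t : ℝ}
    (hx : HasDerivAt x x' t) :
    HasDerivAt (fun s => x s ⬝ᵥ (P *ᵥ x s)) (x' ⬝ᵥ (P *ᵥ x t) + x t ⬝ᵥ (P *ᵥ x')) t := by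
  have hcoord : ∀ i, HasDerivAt (fun s => x s i) (x' i) t := hasDerivAt_pi.1 hx
  have hPx : ∀ i, HasDerivAt (fun s => (P *ᵥ x s) i) ((P *ᵥ x') i) t := fun i =>
    HasDerivAt.fun_sum fun j _ => (hcoord j).const_mul (P i j)
  simp only [dotProduct, ← Finset.sum_add_distrib]
  exact HasDerivAt.fun_sum fun i _ => (hcoord i).mul (hPx i)

theorem le_mul_exp_of_hasDerivAt {f f' : ℝ → ℝ} {κ : ℝ} (hf : ∀ t, HasDerivAt f (f' t) t)
    (hf' : ∀ t, f' t ≤ -κ * f t) {t : ℝ} (ht : 0 ≤ t) :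
    f t ≤ f 0 * Real.exp (-(κ * t)) := by
  have hg : ∀ s, HasDerivAt (fun s => f s * Real.exp (κ * s))
      (f' s * Real.exp (κ * s) + f s * (Real.exp (κ * s) * κ)) s := fun s =>
    (hf s).mul (((hasDerivAt_id s).const_mul κ).exp.congr_deriv (by simp))
  have hanti : Antitone fun s => f s * Real.exp (κ * s) :=
    antitone_of_deriv_nonpos (fun s => (hg s).differentiableAt) fun s => by
      rw [(hg s).deriv]
      nlinarith [hf' s, Real.exp_pos (κ * s)]
  have h0 := hanti ht
  simp only [mul_zero, Real.exp_zero, mul_one] at h0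
  calc f t = f t * Real.exp (κ * t) * Real.exp (-(κ * t)) := by
        rw [mul_assoc, ← Real.exp_add, add_neg_cancel, Real.exp_zero, mul_one]
    _ ≤ f 0 * Real.exp (-(κ * t)) := mul_le_mul_of_nonneg_right h0 (Real.exp_nonneg _)

theorem tendsto_zero_of_quadratic_lyapunov {A P : Matrix ι ι ℝ} {c κ : ℝ} (hc : 0 < c)
    (hκ : 0 < κ) (hP : ∀ y, c * ‖y‖ ^ 2 ≤ y ⬝ᵥ (P *ᵥ y))
    (hdecay : ∀ y, y ⬝ᵥ ((Aᵀ * P + P * A) *ᵥ y) ≤ -κ * (y ⬝ᵥ (P *ᵥ y)))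
    {x : ℝ → ι → ℝ} (hx : ∀ t, HasDerivAt x (A *ᵥ x t) t) :
    Tendsto x atTop (𝓝 0) := by
  set V := fun t => x t ⬝ᵥ (P *ᵥ x t)
  have hV : ∀ t, HasDerivAt V (x t ⬝ᵥ ((Aᵀ * P + P * A) *ᵥ x t)) t := fun t => by
    rw [dotProduct_transpose_mul_add_mul_mulVec]
    exact hasDerivAt_dotProduct_mulVec P (hx t)
  have hbound : ∀ᶠ t in atTop, ‖x t‖ ^ 2 ≤ V 0 / c * Real.exp (-(κ * t)) :=
    eventually_atTop.2 ⟨0, fun t ht => by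
      rw [div_mul_eq_mul_div, le_div_iff₀ hc, mul_comm]
      exact (hP (x t)).trans (le_mul_exp_of_hasDerivAt hV (fun t => hdecay (x t)) ht)⟩
  have hexp : Tendsto (fun t => V 0 / c * Real.exp (-(κ * t))) atTop (𝓝 0) := by
    simpa using (Real.tendsto_exp_atBot.comp
      (tendsto_neg_atTop_atBot.comp (tendsto_id.const_mul_atTop hκ))).const_mul (V 0 / c)
  have hsq : Tendsto (fun t => ‖x t‖ ^ 2) atTop (𝓝 0) :=
    squeeze_zero' (Eventually.of_forall fun t => by positivity) hbound hexp
  rw [tendsto_zero_iff_norm_tendsto_zero]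
  simpa [Real.sqrt_sq (norm_nonneg _)] using hsq.sqrt

theorem tendsto_zero_of_lyapunov_of_cross_term {A P₀ P₁ : Matrix ι ι ℝ}
    (hP₀ : ∀ y ≠ 0, 0 < y ⬝ᵥ (P₀ *ᵥ y))
    (hQ : ∀ y, y ⬝ᵥ ((Aᵀ * P₀ + P₀ * A) *ᵥ y) ≤ 0)
    (hR : ∀ y ≠ 0, y ⬝ᵥ ((Aᵀ * P₀ + P₀ * A) *ᵥ y) = 0 →
      y ⬝ᵥ ((Aᵀ * P₁ + P₁ * A) *ᵥ y) < 0)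
    {x : ℝ → ι → ℝ} (hx : ∀ t, HasDerivAt x (A *ᵥ x t) t) :
    Tendsto x atTop (𝓝 0) := by
  obtain ⟨ε, ⟨c, hc, hlow⟩, ⟨δ, hδ, hdecay⟩⟩ :=
    ((eventually_le_dotProduct_add_smul_mulVec (R := P₁) hP₀).and
      (eventually_dotProduct_add_smul_mulVec_le hQ hR)).exists
  obtain ⟨C, hC, hup⟩ := exists_dotProduct_mulVec_le (P₀ + ε • P₁)
  have hκ : 0 < δ / C := div_pos hδ hC
  refine tendsto_zero_of_quadratic_lyapunov hc hκ hlow (fun y => ?_) hx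
  have hsplit : Aᵀ * (P₀ + ε • P₁) + (P₀ + ε • P₁) * A
      = Aᵀ * P₀ + P₀ * A + ε • (Aᵀ * P₁ + P₁ * A) := by
    simp only [mul_add, add_mul, mul_smul_comm, smul_mul_assoc, smul_add]
    abel
  calc y ⬝ᵥ ((Aᵀ * (P₀ + ε • P₁) + (P₀ + ε • P₁) * A) *ᵥ y) ≤ -δ * ‖y‖ ^ 2 := by
        rw [hsplit]; exact hdecay y
    _ = -(δ / C) * (C * ‖y‖ ^ 2) := by field_simp
    _ ≤ -(δ / C) * (y ⬝ᵥ ((P₀ + ε • P₁) *ᵥ y)) :=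
        mul_le_mul_of_nonpos_left (hup y) (neg_nonpos.2 hκ.le)

end QuadraticForm

section Vectors

variable {ι : Type*} [Fintype ι]

theorem diagonal_mulVec_eq_mul {α : Type*} [NonUnitalNonAssocSemiring α] [DecidableEq ι]
    (d x : ι → α) : diagonal d *ᵥ x = d * x :=
  funext (mulVec_diagonal d x)

theorem inv_diagonal_of_ne_zero [DecidableEq ι] {d : ι → ℝ} (hd : ∀ i, d i ≠ 0) :
    (diagonal d)⁻¹ = diagonal d⁻¹ :=
  inv_eq_left_inv <| by
    rw [diagonal_mul_diagonal, ← diagonal_one]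
    exact congrArg diagonal (funext fun i => inv_mul_cancel₀ (hd i))

theorem dotProduct_mul_nonneg {d : ι → ℝ} (hd : ∀ i, 0 ≤ d i) (w : ι → ℝ) :
    0 ≤ w ⬝ᵥ (d * w) :=
  Finset.sum_nonneg fun i _ => by
    simpa [mul_left_comm] using mul_nonneg (hd i) (mul_self_nonneg (w i))

theorem dotProduct_mul_eq_zero_iff {d : ι → ℝ} (hd : ∀ i, 0 < d i) {w : ι → ℝ} :
    w ⬝ᵥ (d * w) = 0 ↔ w = 0 := by
  refine ⟨fun h => funext fun i => ?_, fun h => by simp [h]⟩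
  have hi := (Finset.sum_eq_zero_iff_of_nonneg fun i _ => by
    simpa [mul_left_comm] using mul_nonneg (hd i).le (mul_self_nonneg (w i))).1 h i
    (Finset.mem_univ i)
  simpa [(hd i).ne'] using hi

theorem dotProduct_mul_pos {d : ι → ℝ} (hd : ∀ i, 0 < d i) {w : ι → ℝ} (hw : w ≠ 0) :
    0 < w ⬝ᵥ (d * w) :=
  (dotProduct_mul_nonneg (fun i => (hd i).le) w).lt_of_ne
    (Ne.symm (mt (dotProduct_mul_eq_zero_iff hd).1 hw))

theorem Matrix.PosSemidef.two_mul_mul_dotProduct_mulVec_le {L : Matrix ι ι ℝ}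
    (hL : L.PosSemidef) (a b : ℝ) (v p : ι → ℝ) :
    2 * a * b * (v ⬝ᵥ (L *ᵥ p)) ≤ a ^ 2 * (v ⬝ᵥ (L *ᵥ v)) + b ^ 2 * (p ⬝ᵥ (L *ᵥ p)) := by
  have hsymm : p ⬝ᵥ (L *ᵥ v) = v ⬝ᵥ (L *ᵥ p) := by
    rw [dotProduct_mulVec, ← mulVec_transpose, dotProduct_comm,
      ← conjTranspose_eq_transpose_of_trivial, hL.1.eq]
  have := hL.dotProduct_mulVec_nonneg (a • v - b • p)
  simp only [star_trivial, mulVec_sub, mulVec_smul, dotProduct_sub, sub_dotProduct,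
    dotProduct_smul, smul_dotProduct, smul_eq_mul, hsymm] at this
  linarith

end Vectors

section Orthonormal

variable {m k : Type*} [Fintype m] [Fintype k] [DecidableEq m] [DecidableEq k]

/-- Adjoining the column `1` to `S` gives a square matrix with left inverse `[Sᵀ; 1ᵀ / card m]`,
which is then also a right inverse. -/
theorem mul_transpose_add_eq_one {S : Matrix m k ℝ} (hS : Sᵀ * S = 1)
    (hS1 : Sᵀ *ᵥ (fun _ => (1 : ℝ)) = 0) (hcard : Fintype.card k + 1 = Fintype.card m) :
    S * Sᵀ + (Fintype.card m : ℝ)⁻¹ • Matrix.of (fun _ _ => (1 : ℝ)) = 1 := by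
  have hm : (Fintype.card m : ℝ) ≠ 0 := by rw [← hcard]; positivity
  have e : m ≃ k ⊕ Unit := Fintype.equivOfCardEq (by simp [hcard])
  have hS1' : ∀ j, ∑ i, S i j = 0 := fun j => by
    simpa [Matrix.mulVec, dotProduct] using congrFun hS1 j
  have key := (fromCols_mul_fromRows_eq_one_comm e S (replicateCol Unit fun _ => (1 : ℝ))
    Sᵀ (replicateRow Unit fun _ => (Fintype.card m : ℝ)⁻¹)).2 ?_
  · rw [fromCols_mul_fromRows] at key
    rw [← key]
    congr 1
    ext i j
    simp [Matrix.mul_apply]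
  · rw [fromRows_mul_fromCols, hS, ← fromBlocks_one]
    congr 1 <;> ext <;> simp [Matrix.mul_apply, hm, ← Finset.mul_sum, hS1']

theorem mulVec_transpose_mulVec_eq_self {S : Matrix m k ℝ} (hS : Sᵀ * S = 1)
    (hS1 : Sᵀ *ᵥ (fun _ => (1 : ℝ)) = 0) (hcard : Fintype.card k + 1 = Fintype.card m)
    {z : m → ℝ} (hz : z ⬝ᵥ (fun _ => (1 : ℝ)) = 0) : S *ᵥ (Sᵀ *ᵥ z) = z := by
  have h := congrArg (· *ᵥ z) (mul_transpose_add_eq_one hS hS1 hcard)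
  have hJ : (Matrix.of fun _ _ => (1 : ℝ) : Matrix m m ℝ) *ᵥ z = 0 := by
    ext i
    simpa [Matrix.mulVec, dotProduct] using hz
  simpa only [add_mulVec, smul_mulVec, hJ, smul_zero, add_zero, one_mulVec, mulVec_mulVec]
    using h

end Orthonormal

namespace IsConnLaplacian

variable {n : ℕ} {L : Matrix (Fin n) (Fin n) ℝ}

theorem transpose_eq (hL : IsConnLaplacian L) : Lᵀ = L := by
  simpa [conjTranspose_eq_transpose_of_trivial] using hL.1.1.eq

theorem dotProduct_mulVec_nonneg (hL : IsConnLaplacian L) (v : Fin n → ℝ) :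
    0 ≤ v ⬝ᵥ (L *ᵥ v) := by
  simpa using hL.1.dotProduct_mulVec_nonneg v

theorem mulVec_dotProduct_one (hL : IsConnLaplacian L) (v : Fin n → ℝ) :
    (L *ᵥ v) ⬝ᵥ (fun _ => (1 : ℝ)) = 0 := by
  rw [dotProduct_comm, dotProduct_mulVec, ← mulVec_transpose, hL.transpose_eq, hL.2.1,
    zero_dotProduct]

theorem eq_zero_of_dotProduct_mulVec_eq_zero (hL : IsConnLaplacian L) (hn : n ≠ 0)
    {v : Fin n → ℝ} (hv1 : v ⬝ᵥ (fun _ => (1 : ℝ)) = 0) (hv : v ⬝ᵥ (L *ᵥ v) = 0) : v = 0 := by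
  obtain ⟨c, rfl⟩ := hL.2.2 v ((hL.1.dotProduct_mulVec_zero_iff v).1 (by simpa using hv))
  have hnc : (n : ℝ) * c = 0 := by simpa [dotProduct] using hv1
  obtain rfl : c = 0 := (mul_eq_zero.1 hnc).resolve_left (Nat.cast_ne_zero.2 hn)
  rfl

theorem eq_zero_of_dotProduct_mulVec_mulVec_eq_zero (hL : IsConnLaplacian L) (hn : n ≠ 0)
    {S : Matrix (Fin n) (Fin (n - 1)) ℝ} (hS : Sᵀ * S = 1)
    (hS1 : Sᵀ *ᵥ (fun _ => (1 : ℝ)) = 0) {φ : Fin (n - 1) → ℝ}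
    (h : (S *ᵥ φ) ⬝ᵥ (L *ᵥ (S *ᵥ φ)) = 0) : φ = 0 := by
  have hSφ : S *ᵥ φ = 0 := hL.eq_zero_of_dotProduct_mulVec_eq_zero hn (by
    rw [dotProduct_comm, dotProduct_mulVec, ← mulVec_transpose, hS1, zero_dotProduct]) h
  calc φ = (Sᵀ * S) *ᵥ φ := by rw [hS, one_mulVec]
    _ = 0 := by rw [← mulVec_mulVec, hSφ, mulVec_zero]

end IsConnLaplacian

theorem exists_eq_sumElim {n : ℕ} (y : Idx n → ℝ) :
    ∃ w v η : Fin n → ℝ, ∃ φ : Fin (n - 1) → ℝ, y = w ⊕ᵥ v ⊕ᵥ (η ⊕ᵥ φ) :=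
  ⟨(y ∘ Sum.inl) ∘ Sum.inl, (y ∘ Sum.inl) ∘ Sum.inr, (y ∘ Sum.inr) ∘ Sum.inl,
    (y ∘ Sum.inr) ∘ Sum.inr, by simp only [Sum.elim_comp_inl_inr]⟩

/-- The matrix of the cross term `2 ω̂ ⬝ η`. -/
def crossMatrix (n : ℕ) : Matrix (Idx n) (Idx n) ℝ :=
  fromBlocks 0 (fromBlocks 1 0 0 0) (fromBlocks 1 0 0 0) 0

theorem transpose_crossMatrix (n : ℕ) : (crossMatrix n)ᵀ = crossMatrix n := by
  simp [crossMatrix, fromBlocks_transpose]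

section ClosedLoop

variable {n : ℕ} (m e kw kv kd kdi : Fin n → ℝ) (LR Leta : Matrix (Fin n) (Fin n) ℝ)
  (S : Matrix (Fin n) (Fin (n - 1)) ℝ) (Vnom γ kphi : ℝ)

local notation "𝔸" => closedLoopA (diagonal m) (diagonal e) (diagonal kw) (diagonal kv)
  (diagonal kd) (diagonal kdi) LR Leta (kphi • LR) S Vnom γ

/-- Without `kw i ≠ 0` and `kv i ≠ 0` the inverses `Kw⁻¹`, `KV⁻¹` in `closedLoopA` would be the
junk value `0`. -/
theorem closedLoopA_mulVec (hkw : ∀ i, kw i ≠ 0) (hkv : ∀ i, kv i ≠ 0) (w v η : Fin n → ℝ)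
    (φ : Fin (n - 1) → ℝ) :
    𝔸 *ᵥ (w ⊕ᵥ v ⊕ᵥ (η ⊕ᵥ φ)) =
      (m * (-(kd + kw) * w + kv * v - kv / kw * kdi * η - kphi • (LR *ᵥ (S *ᵥ φ))) ⊕ᵥ
        e * (Vnom⁻¹ • (kw * w - kv * v + kphi • (LR *ᵥ (S *ᵥ φ))) - LR *ᵥ v)) ⊕ᵥ
      (kdi * w - Leta *ᵥ η ⊕ᵥ (Sᵀ *ᵥ (kw / kv * w) - γ • φ)) := by
  rw [show kw / kv * w = kv⁻¹ * (kw * w) by rw [div_eq_mul_inv]; ring]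
  ext ((i | i) | (i | i)) <;>
    simp [closedLoopA, fromBlocks_mulVec, add_mulVec, neg_mulVec, smul_mulVec, ← mulVec_mulVec,
      inv_diagonal_of_ne_zero hkw, inv_diagonal_of_ne_zero hkv, diagonal_mulVec_eq_mul] <;>
    ring

noncomputable def energyMatrix : Matrix (Idx n) (Idx n) ℝ :=
  fromBlocks (fromBlocks (diagonal (kw / (kv * m))) 0 0 (diagonal (Vnom • e⁻¹))) 0 0
    (fromBlocks 1 0 0 (kphi • (Sᵀ * LR * S)))

theorem transpose_energyMatrix (hLR : LRᵀ = LR) :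
    (energyMatrix m e kw kv LR S Vnom kphi)ᵀ = energyMatrix m e kw kv LR S Vnom kphi := by
  simp [energyMatrix, fromBlocks_transpose, transpose_mul, hLR, Matrix.mul_assoc]

theorem dotProduct_energyMatrix_mulVec (w v η a b c : Fin n → ℝ) (φ ψ : Fin (n - 1) → ℝ) :
    (w ⊕ᵥ v ⊕ᵥ (η ⊕ᵥ φ)) ⬝ᵥ (energyMatrix m e kw kv LR S Vnom kphi *ᵥ (a ⊕ᵥ b ⊕ᵥ (c ⊕ᵥ ψ))) =
      w ⬝ᵥ (kw / (kv * m) * a) + v ⬝ᵥ (Vnom • e⁻¹ * b) + η ⬝ᵥ c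
        + kphi * ((S *ᵥ φ) ⬝ᵥ (LR *ᵥ (S *ᵥ ψ))) := by
  simp only [energyMatrix, fromBlocks_mulVec, sumElim_dotProduct_sumElim, Sum.elim_comp_inl,
    Sum.elim_comp_inr, diagonal_mulVec_eq_mul, zero_mulVec, add_zero, zero_add, one_mulVec,
    smul_mulVec, dotProduct_smul, smul_eq_mul, ← mulVec_mulVec, dotProduct_mulVec φ Sᵀ,
    vecMul_transpose, add_assoc]

theorem dotProduct_energyMatrix_mulVec_pos (hm : ∀ i, 0 < m i) (he : ∀ i, 0 < e i)
    (hkw : ∀ i, 0 < kw i) (hkv : ∀ i, 0 < kv i) (hVnom : 0 < Vnom) (hkphi : 0 < kphi)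
    (hLR : IsConnLaplacian LR) (hS : Sᵀ * S = 1) (hS1 : Sᵀ *ᵥ (fun _ => (1 : ℝ)) = 0)
    (hn : n ≠ 0) {y : Idx n → ℝ} (hy : y ≠ 0) :
    0 < y ⬝ᵥ (energyMatrix m e kw kv LR S Vnom kphi *ᵥ y) := by
  obtain ⟨w, v, η, φ, rfl⟩ := exists_eq_sumElim y
  rw [dotProduct_energyMatrix_mulVec]
  have hwc : ∀ i, 0 < (kw / (kv * m)) i := fun i => by
    simpa using div_pos (hkw i) (mul_pos (hkv i) (hm i))
  have hvc : ∀ i, 0 < (Vnom • e⁻¹) i := fun i => by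
    simpa using mul_pos hVnom (inv_pos.2 (he i))
  have hw := dotProduct_mul_nonneg (fun i => (hwc i).le) w
  have hv := dotProduct_mul_nonneg (fun i => (hvc i).le) v
  have hη : 0 ≤ η ⬝ᵥ η := by simpa using dotProduct_self_star_nonneg η
  have hφ := mul_nonneg hkphi.le (hLR.dotProduct_mulVec_nonneg (S *ᵥ φ))
  refine lt_of_le_of_ne (by linarith) fun h => hy ?_
  obtain rfl : w = 0 := (dotProduct_mul_eq_zero_iff hwc).1 (by linarith)
  obtain rfl : v = 0 := (dotProduct_mul_eq_zero_iff hvc).1 (by linarith)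
  obtain rfl : η = 0 := dotProduct_self_eq_zero.1 (by linarith)
  obtain rfl : φ = 0 := hLR.eq_zero_of_dotProduct_mulVec_mulVec_eq_zero hn hS hS1
    ((mul_eq_zero.1 (by linarith : kphi * _ = 0)).resolve_left hkphi.ne')
  ext ((i | i) | (i | i)) <;> rfl

/-- The integral-action terms `kdI ω̂ ⬝ η` cancel between the `ω̂`- and `η`-rows, and the terms
`ω̂ ⬝ L_φ S φ''` between the `ω̂`- and `φ''`-rows (via `S Sᵀ = 1` on `1ᗮ ⊇ range LR`). -/
theorem dotProduct_energyMatrix_mulVec_closedLoopA (hm : ∀ i, m i ≠ 0) (he : ∀ i, e i ≠ 0)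
    (hkw : ∀ i, kw i ≠ 0) (hkv : ∀ i, kv i ≠ 0) (hVnom : Vnom ≠ 0) (hLR : IsConnLaplacian LR)
    (hS : Sᵀ * S = 1) (hS1 : Sᵀ *ᵥ (fun _ => (1 : ℝ)) = 0) (hn : n ≠ 0)
    (w v η : Fin n → ℝ) (φ : Fin (n - 1) → ℝ) :
    (w ⊕ᵥ v ⊕ᵥ (η ⊕ᵥ φ)) ⬝ᵥ
        (energyMatrix m e kw kv LR S Vnom kphi *ᵥ (𝔸 *ᵥ (w ⊕ᵥ v ⊕ᵥ (η ⊕ᵥ φ)))) =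
      -(∑ i, (kw i * kd i / kv i * w i ^ 2 + (kw i * w i - kv i * v i) ^ 2 / kv i))
        - (Vnom * (v ⬝ᵥ (LR *ᵥ v)) - kphi * (v ⬝ᵥ (LR *ᵥ (S *ᵥ φ)))
          + γ * kphi * ((S *ᵥ φ) ⬝ᵥ (LR *ᵥ (S *ᵥ φ))))
        - η ⬝ᵥ (Leta *ᵥ η) := by
  have hcard : Fintype.card (Fin (n - 1)) + 1 = Fintype.card (Fin n) := by simp; omega
  have hcross : ∀ u, (S *ᵥ φ) ⬝ᵥ (LR *ᵥ (S *ᵥ (Sᵀ *ᵥ u))) = (LR *ᵥ (S *ᵥ φ)) ⬝ᵥ u := fun u => by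
    rw [dotProduct_mulVec, ← mulVec_transpose, hLR.transpose_eq, dotProduct_mulVec,
      ← mulVec_transpose, dotProduct_mulVec, vecMul_transpose,
      mulVec_transpose_mulVec_eq_self hS hS1 hcard (hLR.mulVec_dotProduct_one _)]
  rw [closedLoopA_mulVec m e kw kv kd kdi LR Leta S Vnom γ kphi hkw hkv,
    dotProduct_energyMatrix_mulVec]
  simp only [mulVec_sub, dotProduct_sub, hcross, mulVec_smul, dotProduct_smul]
  simp only [dotProduct, Pi.mul_apply, Pi.sub_apply, Pi.add_apply, Pi.smul_apply, Pi.neg_apply,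
    Pi.div_apply, Pi.inv_apply, smul_eq_mul, Finset.mul_sum, ← Finset.sum_add_distrib,
    ← Finset.sum_sub_distrib, ← Finset.sum_neg_distrib]
  refine Finset.sum_congr rfl fun i _ => ?_
  have := hm i; have := he i; have := hkw i; have := hkv i
  field_simp
  ring

theorem dotProduct_energyMatrix_mulVec_closedLoopA_nonpos_and_eq_zero (hm : ∀ i, 0 < m i)
    (he : ∀ i, 0 < e i) (hkw : ∀ i, 0 < kw i) (hkv : ∀ i, 0 < kv i) (hkd : ∀ i, 0 < kd i)
    (hVnom : 0 < Vnom) (hkphi : 0 < kphi) (hγ : kphi / (4 * Vnom) < γ)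
    (hLR : IsConnLaplacian LR) (hLeta : IsConnLaplacian Leta) (hS : Sᵀ * S = 1)
    (hS1 : Sᵀ *ᵥ (fun _ => (1 : ℝ)) = 0) (hn : n ≠ 0) (w v η : Fin n → ℝ)
    (φ : Fin (n - 1) → ℝ) :
    (w ⊕ᵥ v ⊕ᵥ (η ⊕ᵥ φ)) ⬝ᵥ (energyMatrix m e kw kv LR S Vnom kphi *ᵥ
        (𝔸 *ᵥ (w ⊕ᵥ v ⊕ᵥ (η ⊕ᵥ φ)))) ≤ 0 ∧
      ((w ⊕ᵥ v ⊕ᵥ (η ⊕ᵥ φ)) ⬝ᵥ (energyMatrix m e kw kv LR S Vnom kphi *ᵥ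
        (𝔸 *ᵥ (w ⊕ᵥ v ⊕ᵥ (η ⊕ᵥ φ)))) = 0 → w = 0 ∧ v = 0 ∧ φ = 0) := by
  rw [dotProduct_energyMatrix_mulVec_closedLoopA m e kw kv kd kdi LR Leta S Vnom γ kphi
    (fun i => (hm i).ne') (fun i => (he i).ne') (fun i => (hkw i).ne') (fun i => (hkv i).ne')
    hVnom.ne' hLR hS hS1 hn]
  set p := S *ᵥ φ
  have hterm : ∀ i, 0 ≤ kw i * kd i / kv i * w i ^ 2 := fun i => by
    have := hkw i; have := hkd i; have := hkv i; positivity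
  have hsq : ∀ i, 0 ≤ (kw i * w i - kv i * v i) ^ 2 / kv i := fun i => by
    have := hkv i; positivity
  set damping := ∑ i, (kw i * kd i / kv i * w i ^ 2 + (kw i * w i - kv i * v i) ^ 2 / kv i)
  have hdamping : 0 ≤ damping := Finset.sum_nonneg fun i _ => add_nonneg (hterm i) (hsq i)
  -- Assumption 2 makes the `φ''`-form dominate the `V̂`–`φ''` coupling.
  have hgap : 0 < (4 * Vnom * γ - kphi) * kphi := by
    rw [div_lt_iff₀ (by positivity)] at hγ
    exact mul_pos (by linarith) hkphi
  have hpp := hLR.dotProduct_mulVec_nonneg p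
  have hcoupling := hLR.1.two_mul_mul_dotProduct_mulVec_le (2 * Vnom) kphi v p
  have hphase : 0 ≤ Vnom * (v ⬝ᵥ (LR *ᵥ v)) - kphi * (v ⬝ᵥ (LR *ᵥ p))
      + γ * kphi * (p ⬝ᵥ (LR *ᵥ p)) := by nlinarith
  have hη := hLeta.dotProduct_mulVec_nonneg η
  refine ⟨by linarith, fun h => ?_⟩
  have hsum0 := (Finset.sum_eq_zero_iff_of_nonneg fun i _ => add_nonneg (hterm i) (hsq i)).1
    (show damping = 0 by linarith)
  have hsplit := fun i => (add_eq_zero_iff_of_nonneg (hterm i) (hsq i)).1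
    (hsum0 i (Finset.mem_univ i))
  obtain rfl : w = 0 := funext fun i => by
    simpa [(hkw i).ne', (hkd i).ne', (hkv i).ne'] using (hsplit i).1
  refine ⟨rfl, funext fun i => by simpa [(hkv i).ne'] using (hsplit i).2, ?_⟩
  exact hLR.eq_zero_of_dotProduct_mulVec_mulVec_eq_zero hn hS hS1 (by nlinarith)

theorem dotProduct_crossMatrix_mulVec_closedLoopA (hkw : ∀ i, kw i ≠ 0) (hkv : ∀ i, kv i ≠ 0)
    (η : Fin n → ℝ) :
    (0 ⊕ᵥ 0 ⊕ᵥ (η ⊕ᵥ 0)) ⬝ᵥ (crossMatrix n *ᵥ (𝔸 *ᵥ (0 ⊕ᵥ 0 ⊕ᵥ (η ⊕ᵥ 0)))) =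
      -(η ⬝ᵥ (m * (kv / kw * kdi) * η)) := by
  rw [closedLoopA_mulVec m e kw kv kd kdi LR Leta S Vnom γ kphi hkw hkv]
  simp only [crossMatrix, fromBlocks_mulVec, sumElim_dotProduct_sumElim, Sum.elim_comp_inl,
    Sum.elim_comp_inr, zero_mulVec, one_mulVec, mulVec_zero, zero_dotProduct, add_zero, zero_add,
    mul_zero, smul_zero, sub_zero, zero_sub, mul_neg, dotProduct_neg, neg_zero, ← mul_assoc]

end ClosedLoop

theorem stmt_0_general {n : ℕ} (hn : 2 ≤ n)
    (m e kw kv kd kdi : Fin n → ℝ)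
    (hm : ∀ i, 0 < m i) (he : ∀ i, 0 < e i) (hkw : ∀ i, 0 < kw i)
    (hkv : ∀ i, 0 < kv i) (hkd : ∀ i, 0 < kd i) (hkdi : ∀ i, 0 < kdi i)
    (LR Leta Lphi : Matrix (Fin n) (Fin n) ℝ)
    (hLR : IsConnLaplacian LR) (hLeta : IsConnLaplacian Leta)
    (S : Matrix (Fin n) (Fin (n - 1)) ℝ)
    (hS : Sᵀ * S = 1) (hS1 : Sᵀ *ᵥ (fun _ => (1 : ℝ)) = 0)
    (Vnom γ kphi : ℝ) (hVnom : 0 < Vnom) (hkphi : 0 < kphi)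
    -- Assumption 1
    (hass1 : Lphi = kphi • LR)
    -- Assumption 2
    (hass2 : γ > kphi / (4 * Vnom))
    (A : Matrix (Idx n) (Idx n) ℝ)
    (hA : A = closedLoopA (Matrix.diagonal m) (Matrix.diagonal e)
      (Matrix.diagonal kw) (Matrix.diagonal kv) (Matrix.diagonal kd)
      (Matrix.diagonal kdi) LR Leta Lphi S Vnom γ)
    (x : ℝ → (Idx n → ℝ))
    (hx : ∀ t : ℝ, HasDerivAt x (A *ᵥ (x t)) t) :
    Tendsto x atTop (nhds 0) := by
  subst hA hass1
  have hn0 : n ≠ 0 := by omega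
  have hrate := dotProduct_energyMatrix_mulVec_closedLoopA_nonpos_and_eq_zero m e kw kv kd kdi
    LR Leta S Vnom γ kphi hm he hkw hkv hkd hVnom hkphi hass2 hLR hLeta hS hS1 hn0
  have hP₀ := transpose_energyMatrix m e kw kv LR S Vnom kphi hLR.transpose_eq
  refine tendsto_zero_of_lyapunov_of_cross_term (P₁ := crossMatrix n)
    (fun y hy => dotProduct_energyMatrix_mulVec_pos m e kw kv LR S Vnom kphi hm he hkw hkv hVnom
      hkphi hLR hS hS1 hn0 hy) (fun y => ?_) (fun y hy h => ?_) hx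
  · obtain ⟨w, v, η, φ, rfl⟩ := exists_eq_sumElim y
    rw [dotProduct_transpose_mul_add_mul_mulVec_of_transpose_eq hP₀]
    linarith [(hrate w v η φ).1]
  · obtain ⟨w, v, η, φ, rfl⟩ := exists_eq_sumElim y
    rw [dotProduct_transpose_mul_add_mul_mulVec_of_transpose_eq hP₀] at h
    obtain ⟨rfl, rfl, rfl⟩ := (hrate w v η φ).2 (by linarith)
    have hη : η ≠ 0 := by
      rintro rfl
      exact hy (by ext ((i | i) | (i | i)) <;> rfl)
    rw [dotProduct_transpose_mul_add_mul_mulVec_of_transpose_eq (transpose_crossMatrix n),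
      dotProduct_crossMatrix_mulVec_closedLoopA m e kw kv kd kdi LR Leta S Vnom γ kphi
        (fun i => (hkw i).ne') (fun i => (hkv i).ne')]
    have := dotProduct_mul_pos (d := m * (kv / kw * kdi)) (fun i =>
      mul_pos (hm i) (mul_pos (div_pos (hkv i) (hkw i)) (hkdi i))) hη
    linarith

/-- Theorem 1: under Assumptions 1 and 2, the origin of `ẋ = A x` is globally
asymptotically stable: every solution converges to `0`. -/
theorem stmt_0 {n : ℕ} (hn : 2 ≤ n)
    (m e kw kv kd kdi : Fin n → ℝ)
    (hm : ∀ i, 0 < m i) (he : ∀ i, 0 < e i) (hkw : ∀ i, 0 < kw i)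
    (hkv : ∀ i, 0 < kv i) (hkd : ∀ i, 0 < kd i) (hkdi : ∀ i, 0 < kdi i)
    (LR Leta Lphi : Matrix (Fin n) (Fin n) ℝ)
    (hLR : IsConnLaplacian LR) (hLeta : IsConnLaplacian Leta)
    (hLphi : IsConnLaplacian Lphi)
    (S : Matrix (Fin n) (Fin (n - 1)) ℝ)
    (hS : Sᵀ * S = 1) (hS1 : Sᵀ *ᵥ (fun _ => (1 : ℝ)) = 0)
    (Vnom γ kphi : ℝ) (hVnom : 0 < Vnom) (hγ : 0 < γ) (hkphi : 0 < kphi)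
    -- Assumption 1
    (hass1 : Lphi = kphi • LR)
    -- Assumption 2
    (hass2 : γ > kphi / (4 * Vnom))
    (A : Matrix (Idx n) (Idx n) ℝ)
    (hA : A = closedLoopA (Matrix.diagonal m) (Matrix.diagonal e)
      (Matrix.diagonal kw) (Matrix.diagonal kv) (Matrix.diagonal kd)
      (Matrix.diagonal kdi) LR Leta Lphi S Vnom γ)
    (x : ℝ → (Idx n → ℝ))
    (hx : ∀ t : ℝ, HasDerivAt x (A *ᵥ (x t)) t) :
    Tendsto x atTop (nhds 0) :=
  stmt_0_general hn m e kw kv kd kdi hm he hkw hkv hkd hkdi LR Leta Lphi hLR hLeta S hS hS1 Vnom γ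
    kphi hVnom hkphi hass1 hass2 A hA x hx
end

section
/- Under Assumptions 1 and 2, the closed-loop system matrix A is Hurwitz: every eigenvalue μ ∈ ℂ of A (i.e., every element of the spectrum of A regarded as a complex matrix) satisfies Re(μ) < 0. -/
open Matrix Filter

/-!
Let `(a, b, c, d)` be an eigenvector of `A` for the eigenvalue `μ`, and put `ψ = S d`,
`V = V^nom`. With the weighted energy `E = Σ kw/(kv m) |a|² + V/e |b|² + |c|²` and
`H = ψ* L_R ψ`, a direct computation gives
`Re μ · (E + kφ H) = -D - V b* L_R b + kφ Re(b* L_R ψ) - kφ γ H - c* L_η c`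
with `D = Σ kw kd/kv |a|² + |kw a - kv b|²/kv`: for these weights the `η`-coupling is skew, and
the `a`-`ψ` cross terms cancel because `L_φ = kφ L_R` and `L_R S Sᵀ = L_R`. Cauchy–Schwarz for
the form `L_R` bounds the remaining cross term by `V b* L_R b + kφ²/(4V) H`, so under
Assumption 2, `Re μ ≥ 0` forces `D = 0` and `H = 0`, i.e. `a = b = 0` and `L_R ψ = 0`. The
`ω̂`-row then gives `c = 0`, and `ψ ∈ ker L_R = span 1` gives `d = Sᵀ ψ = 0`.
-/

open scoped ComplexOrder

namespace Matrix

variable {l m n : Type*} [Fintype n]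

theorem map_ofReal_mul_mulVec [Fintype m] (X : Matrix l m ℝ) (Y : Matrix m n ℝ) (x : n → ℂ) :
    (X * Y).map (↑) *ᵥ x = X.map (↑) *ᵥ (Y.map (↑) *ᵥ x) := by
  rw [mulVec_mulVec]
  congr 1
  exact Matrix.map_mul (f := Complex.ofRealHom)

theorem map_ofReal_add_mulVec (X Y : Matrix m n ℝ) (x : n → ℂ) :
    (X + Y).map (↑) *ᵥ x = X.map (↑) *ᵥ x + Y.map (↑) *ᵥ x := by
  rw [Matrix.map_add _ Complex.ofReal_add, add_mulVec]

theorem map_ofReal_neg_mulVec (X : Matrix m n ℝ) (x : n → ℂ) :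
    (-X).map (↑) *ᵥ x = -(X.map (↑) *ᵥ x) := by
  rw [Matrix.map_neg _ Complex.ofReal_neg, neg_mulVec]

theorem map_ofReal_smul_mulVec (r : ℝ) (X : Matrix m n ℝ) (x : n → ℂ) :
    (r • X).map (↑) *ᵥ x = (r : ℂ) • (X.map (↑) *ᵥ x) := by
  ext i
  simp [mulVec, dotProduct, Finset.mul_sum, mul_assoc]

theorem map_ofReal_zero_mulVec (x : n → ℂ) : (0 : Matrix m n ℝ).map (↑) *ᵥ x = 0 := by
  ext i
  simp

theorem map_ofReal_one_mulVec [DecidableEq n] (x : n → ℂ) :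
    (1 : Matrix n n ℝ).map (↑) *ᵥ x = x := by
  ext i
  simp

theorem map_ofReal_diagonal_mulVec [DecidableEq n] (k : n → ℝ) (x : n → ℂ) :
    (diagonal k).map (↑) *ᵥ x = fun i => k i * x i := by
  ext i
  simp [mulVec_diagonal]

theorem re_map_ofReal_mulVec (X : Matrix m n ℝ) (x : n → ℂ) (i : m) :
    ((X.map (↑) *ᵥ x) i).re = (X *ᵥ fun j => (x j).re) i := by
  simp [mulVec, dotProduct, Complex.re_sum]

theorem im_map_ofReal_mulVec (X : Matrix m n ℝ) (x : n → ℂ) (i : m) :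
    ((X.map (↑) *ᵥ x) i).im = (X *ᵥ fun j => (x j).im) i := by
  simp [mulVec, dotProduct, Complex.im_sum]

theorem map_ofReal_mulVec_const [Fintype m] (X : Matrix m n ℝ) (z : ℂ) :
    (X.map (↑) *ᵥ fun _ => z) = fun i => (X *ᵥ 1) i * z := by
  ext i
  simp [mulVec, dotProduct, Finset.sum_mul]

theorem exists_eq_const_of_map_ofReal_mulVec_eq_zero {X : Matrix n n ℝ}
    (hX : ∀ u : n → ℝ, X *ᵥ u = 0 → ∃ c : ℝ, u = fun _ => c) {x : n → ℂ}
    (hx : X.map (↑) *ᵥ x = 0) : ∃ z : ℂ, x = fun _ => z := by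
  obtain ⟨r, hr⟩ := hX _ <| funext fun i => by
    simpa [re_map_ofReal_mulVec] using congrArg Complex.re (congrFun hx i)
  obtain ⟨s, hs⟩ := hX _ <| funext fun i => by
    simpa [im_map_ofReal_mulVec] using congrArg Complex.im (congrFun hx i)
  exact ⟨⟨r, s⟩, funext fun j => Complex.ext (congrFun hr j) (congrFun hs j)⟩

open scoped MatrixOrder in
theorem PosSemidef.map_ofReal {L : Matrix n n ℝ} (hL : L.PosSemidef) :
    (L.map ((↑) : ℝ → ℂ)).PosSemidef := by
  classical
  obtain ⟨B, rfl⟩ := CStarAlgebra.nonneg_iff_eq_star_mul_self.mp hL.nonneg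
  change ((star B * B).map Complex.ofRealHom).PosSemidef
  rw [Matrix.map_mul]
  convert posSemidef_conjTranspose_mul_self (B.map Complex.ofRealHom)
  ext i j
  simp

section HermitianForm

variable {𝕜 : Type*} [RCLike 𝕜] {A : Matrix n n 𝕜}

theorem IsHermitian.re_dotProduct_mulVec_comm (hA : A.IsHermitian) (x y : n → 𝕜) :
    RCLike.re (star x ⬝ᵥ A *ᵥ y) = RCLike.re (star y ⬝ᵥ A *ᵥ x) := by
  have h : star x ᵥ* A = star (A *ᵥ x) := by rw [star_mulVec, hA.eq]
  rw [dotProduct_mulVec, h, star_dotProduct, RCLike.star_def, RCLike.conj_re]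

theorem PosSemidef.two_mul_re_dotProduct_mulVec_le (hA : A.PosSemidef) (x y : n → 𝕜)
    (t : ℝ) : 2 * t * RCLike.re (star x ⬝ᵥ A *ᵥ y) ≤
      RCLike.re (star x ⬝ᵥ A *ᵥ x) + t ^ 2 * RCLike.re (star y ⬝ᵥ A *ᵥ y) := by
  have h := hA.re_dotProduct_nonneg (x - (t : 𝕜) • y)
  simp only [star_sub, star_smul, RCLike.star_def, RCLike.conj_ofReal, mulVec_sub, mulVec_smul,
    sub_dotProduct, dotProduct_sub, smul_dotProduct, dotProduct_smul, map_sub, smul_eq_mul,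
    RCLike.re_ofReal_mul] at h
  rw [hA.isHermitian.re_dotProduct_mulVec_comm y x] at h
  nlinarith

theorem IsHermitian.re_mul_re_dotProduct_mulVec_self (hA : A.IsHermitian) {μ : 𝕜}
    {γ : ℝ} {x y : n → 𝕜} (h : μ • (A *ᵥ x) = A *ᵥ y - (γ : 𝕜) • (A *ᵥ x)) :
    RCLike.re μ * RCLike.re (star x ⬝ᵥ A *ᵥ x) =
      RCLike.re (star y ⬝ᵥ A *ᵥ x) - γ * RCLike.re (star x ⬝ᵥ A *ᵥ x) := by
  have h' := congrArg (fun v => RCLike.re (star x ⬝ᵥ v)) h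
  simp only [dotProduct_smul, dotProduct_sub, smul_eq_mul, map_sub, RCLike.mul_re,
    hA.im_star_dotProduct_mulVec_self, mul_zero, sub_zero, RCLike.ofReal_re] at h'
  rw [h', hA.re_dotProduct_mulVec_comm]

end HermitianForm

theorem exists_mulVec_eq_smul_of_mem_spectrum {K : Type*} [Field K] [DecidableEq n]
    {A : Matrix n n K} {μ : K} (h : μ ∈ spectrum K A) :
    ∃ v ≠ 0, A *ᵥ v = μ • v := by
  rw [← Matrix.spectrum_toLin', ← Module.End.hasEigenvalue_iff_mem_spectrum] at h
  obtain ⟨v, hv⟩ := h.exists_hasEigenvector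
  exact ⟨v, hv.2, hv.apply_eq_smul⟩

/-- The columns of `S` are orthonormal in `1⊥`, hence span it: `S Sᵀ = 1 - 1 1ᵀ / k`. -/
theorem mul_mul_transpose_eq_self {K : Type*} [Field K] [CharZero K] {k : ℕ}
    {L : Matrix (Fin k) (Fin k) K} (hL : L *ᵥ 1 = 0) {S : Matrix (Fin k) (Fin (k - 1)) K}
    (hS : Sᵀ * S = 1) (hS1 : Sᵀ *ᵥ 1 = 0) : L * (S * Sᵀ) = L := by
  rcases Nat.eq_zero_or_pos k with rfl | hk
  · exact Subsingleton.elim _ _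
  set u : Fin k → K := 1
  have hleft : fromRows Sᵀ ((k : K)⁻¹ • replicateRow (Fin 1) u) *
      fromCols S (replicateCol (Fin 1) u) = 1 := by
    rw [fromRows_mul_fromCols, hS, ← replicateCol_mulVec, hS1, smul_mul, ← replicateRow_vecMul,
      ← mulVec_transpose, hS1, smul_mul, replicateRow_mul_replicateCol, replicateCol_zero,
      replicateRow_zero, smul_zero, ← fromBlocks_one]
    congr 1
    ext i j
    obtain rfl := Subsingleton.elim i j
    simp [u, hk.ne']
  have hright : S * Sᵀ + replicateCol (Fin 1) u * ((k : K)⁻¹ • replicateRow (Fin 1) u) = 1 := by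
    rw [← fromCols_mul_fromRows]
    exact (fromCols_mul_fromRows_eq_one_comm
      ((finCongr (by omega)).trans finSumFinEquiv.symm) _ _ _ _).mpr hleft
  rw [eq_sub_of_add_eq hright, mul_sub, mul_one, ← Matrix.mul_assoc, ← replicateCol_mulVec, hL,
    replicateCol_zero, Matrix.zero_mul, sub_zero]

end Matrix

/-- The block rows of `A v = μ v` for `v = (a, b, c, d) = (ω̂, V̂, η, φ'')`, with `L_φ = kφ L_R`. -/
structure ClosedLoopEigenEqns {n : ℕ} (m e kw kv kd kdi : Fin n → ℝ)
    (LR Leta : Matrix (Fin n) (Fin n) ℝ) (S : Matrix (Fin n) (Fin (n - 1)) ℝ) (V γ kφ : ℝ)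
    (μ : ℂ) (a b c : Fin n → ℂ) (d : Fin (n - 1) → ℂ) : Prop where
  omega_eq : ∀ i, μ * a i = -(m i * (kd i + kw i) : ℝ) * a i + (m i * kv i : ℝ) * b i
    - (m i * kv i / kw i * kdi i : ℝ) * c i - (kφ * m i : ℝ) * (LR.map (↑) *ᵥ (S.map (↑) *ᵥ d)) i
  voltage_eq : ∀ i, μ * b i = (e i * kw i / V : ℝ) * a i - e i * (LR.map (↑) *ᵥ b) i
    - (e i * kv i / V : ℝ) * b i + (kφ * e i / V : ℝ) * (LR.map (↑) *ᵥ (S.map (↑) *ᵥ d)) i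
  eta_eq : ∀ i, μ * c i = kdi i * a i - (Leta.map (↑) *ᵥ c) i
  phi_eq : μ • d = Sᵀ.map (↑) *ᵥ (fun i => (kw i / kv i : ℝ) * a i) - (γ : ℂ) • d

theorem closedLoopEigenEqns_of_mulVec_eq_smul {n : ℕ} {m e kw kv kd kdi : Fin n → ℝ}
    (hkw : ∀ i, kw i ≠ 0) (hkv : ∀ i, kv i ≠ 0) {LR Leta : Matrix (Fin n) (Fin n) ℝ}
    {S : Matrix (Fin n) (Fin (n - 1)) ℝ} {V γ kφ : ℝ} {μ : ℂ} {a b c : Fin n → ℂ}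
    {d : Fin (n - 1) → ℂ}
    (h : (closedLoopA (diagonal m) (diagonal e) (diagonal kw) (diagonal kv) (diagonal kd)
      (diagonal kdi) LR Leta (kφ • LR) S V γ).map (↑) *ᵥ Sum.elim (Sum.elim a b) (Sum.elim c d) =
      μ • Sum.elim (Sum.elim a b) (Sum.elim c d)) :
    ClosedLoopEigenEqns m e kw kv kd kdi LR Leta S V γ kφ μ a b c d := by
  have hinv : ∀ k : Fin n → ℝ, (∀ i, k i ≠ 0) → (diagonal k)⁻¹ = diagonal k⁻¹ := fun k hk =>
    inv_eq_right_inv (by rw [diagonal_mul_diagonal]; simp [hk])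
  simp only [closedLoopA, hinv kw hkw, hinv kv hkv, fromBlocks_map, fromBlocks_mulVec,
    Sum.elim_comp_inl, Sum.elim_comp_inr] at h
  have hk := funext_iff.mp h
  simp only [map_ofReal_mul_mulVec, map_ofReal_add_mulVec, map_ofReal_neg_mulVec,
    map_ofReal_smul_mulVec, map_ofReal_zero_mulVec, map_ofReal_diagonal_mulVec,
    map_ofReal_one_mulVec, Pi.add_apply, Pi.neg_apply, Pi.smul_apply, Pi.zero_apply, Pi.inv_apply,
    smul_eq_mul, Sum.forall, Sum.elim_inl, Sum.elim_inr] at hk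
  obtain ⟨⟨h₁, h₂⟩, h₃, h₄⟩ := hk
  push_cast at h₁ h₂ h₃
  refine ⟨fun i => ?_, fun i => ?_, fun i => ?_, funext fun i => ?_⟩
  · push_cast
    linear_combination (h₁ i).symm
  · push_cast
    linear_combination (h₂ i).symm
  · linear_combination (h₃ i).symm
  · simp only [Pi.smul_apply, Pi.sub_apply, smul_eq_mul, ← h₄ i, div_eq_inv_mul, Complex.ofReal_mul,
      mul_assoc]
    ring

open Complex in
theorem closedLoop_energy_balance_coord {μ a b c w wb wc : ℂ} {m e kw kv kd kdi V kφ : ℝ}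
    (hm : m ≠ 0) (he : e ≠ 0) (hkw : kw ≠ 0) (hkv : kv ≠ 0) (hV : V ≠ 0)
    (h₁ : μ * a = -(m * (kd + kw) : ℝ) * a + (m * kv : ℝ) * b - (m * kv / kw * kdi : ℝ) * c
      - (kφ * m : ℝ) * w)
    (h₂ : μ * b = (e * kw / V : ℝ) * a - e * wb - (e * kv / V : ℝ) * b + (kφ * e / V : ℝ) * w)
    (h₃ : μ * c = kdi * a - wc) :
    μ.re * (kw / (kv * m) * ‖a‖ ^ 2 + V / e * ‖b‖ ^ 2 + ‖c‖ ^ 2) =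
      -(kw * kd / kv * ‖a‖ ^ 2 + ‖kw * a - kv * b‖ ^ 2 / kv) - V * (star b * wb).re
        + kφ * (star b * w).re - kφ * (star ((kw / kv : ℝ) * a) * w).re - (star c * wc).re := by
  rw [Complex.ext_iff] at h₁ h₂ h₃
  simp only [mul_re, mul_im, sub_re, sub_im, add_re, add_im, neg_re, neg_im, ofReal_re,
    ofReal_im] at h₁ h₂ h₃
  simp only [Complex.sq_norm, normSq_apply, mul_re, mul_im, sub_re, sub_im, ofReal_re, ofReal_im,
    star_def, conj_re, conj_im]
  linear_combination (norm := skip) (kw / (kv * m)) * (a.re * h₁.1 + a.im * h₁.2)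
    + (V / e) * (b.re * h₂.1 + b.im * h₂.2) + (c.re * h₃.1 + c.im * h₃.2)
  field_simp
  ring

namespace ClosedLoopEigenEqns

variable {n : ℕ} {m e kw kv kd kdi : Fin n → ℝ} {LR Leta : Matrix (Fin n) (Fin n) ℝ}
  {S : Matrix (Fin n) (Fin (n - 1)) ℝ} {V γ kφ : ℝ} {μ : ℂ} {a b c ψ : Fin n → ℂ}
  {d : Fin (n - 1) → ℂ}

theorem energy_balance (h : ClosedLoopEigenEqns m e kw kv kd kdi LR Leta S V γ kφ μ a b c d)
    (hm : ∀ i, m i ≠ 0) (he : ∀ i, e i ≠ 0) (hkw : ∀ i, kw i ≠ 0) (hkv : ∀ i, kv i ≠ 0)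
    (hV : V ≠ 0) (hLR : LR.PosSemidef) (hLRS : LR * (S * Sᵀ) = LR)
    (hψ : S.map (↑) *ᵥ d = ψ) :
    μ.re * (∑ i, (kw i / (kv i * m i) * ‖a i‖ ^ 2 + V / e i * ‖b i‖ ^ 2 + ‖c i‖ ^ 2)
        + kφ * (star ψ ⬝ᵥ LR.map (↑) *ᵥ ψ).re) =
      -∑ i, (kw i * kd i / kv i * ‖a i‖ ^ 2 + ‖kw i * a i - kv i * b i‖ ^ 2 / kv i)
        - V * (star b ⬝ᵥ LR.map (↑) *ᵥ b).re + kφ * (star b ⬝ᵥ LR.map (↑) *ᵥ ψ).re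
        - kφ * γ * (star ψ ⬝ᵥ LR.map (↑) *ᵥ ψ).re - (star c ⬝ᵥ Leta.map (↑) *ᵥ c).re := by
  subst hψ
  have hcoord i := closedLoop_energy_balance_coord (hm i) (he i) (hkw i) (hkv i) hV
    (h.omega_eq i) (h.voltage_eq i) (h.eta_eq i)
  have hproj (y : Fin n → ℂ) :
      LR.map (↑) *ᵥ (S.map (↑) *ᵥ (Sᵀ.map (↑) *ᵥ y)) = LR.map (↑) *ᵥ y := by
    rw [← map_ofReal_mul_mulVec, ← map_ofReal_mul_mulVec, Matrix.mul_assoc, hLRS]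
  have hphi := hLR.map_ofReal.isHermitian.re_mul_re_dotProduct_mulVec_self (x := S.map (↑) *ᵥ d)
    (y := fun i => (kw i / kv i : ℝ) * a i) (μ := μ) (γ := γ) <| by
      rw [← mulVec_smul, ← mulVec_smul, h.phi_eq, mulVec_sub, mulVec_smul, mulVec_sub, mulVec_smul,
        hproj]
      rfl
  simp only [RCLike.re_to_complex] at hphi
  rw [mul_add, Finset.mul_sum, Finset.sum_congr rfl fun i _ => hcoord i, mul_left_comm, hphi]
  simp only [dotProduct, Complex.re_sum, Pi.star_apply, Finset.sum_add_distrib,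
    Finset.sum_sub_distrib, Finset.sum_neg_distrib, ← Finset.mul_sum]
  ring

theorem dissipation_le (h : ClosedLoopEigenEqns m e kw kv kd kdi LR Leta S V γ kφ μ a b c d)
    (hm : ∀ i, 0 < m i) (he : ∀ i, 0 < e i) (hkw : ∀ i, 0 < kw i) (hkv : ∀ i, 0 < kv i)
    (hV : 0 < V) (hLR : LR.PosSemidef) (hLRS : LR * (S * Sᵀ) = LR) (hLeta : Leta.PosSemidef)
    (hψ : S.map (↑) *ᵥ d = ψ) :
    μ.re * (∑ i, (kw i / (kv i * m i) * ‖a i‖ ^ 2 + V / e i * ‖b i‖ ^ 2 + ‖c i‖ ^ 2)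
        + kφ * (star ψ ⬝ᵥ LR.map (↑) *ᵥ ψ).re)
      + ∑ i, (kw i * kd i / kv i * ‖a i‖ ^ 2 + ‖kw i * a i - kv i * b i‖ ^ 2 / kv i)
      + kφ * (γ - kφ / (4 * V)) * (star ψ ⬝ᵥ LR.map (↑) *ᵥ ψ).re ≤ 0 := by
  have hbal := h.energy_balance (fun i => (hm i).ne') (fun i => (he i).ne') (fun i => (hkw i).ne')
    (fun i => (hkv i).ne') hV.ne' hLR hLRS hψ
  have hcs := hLR.map_ofReal.two_mul_re_dotProduct_mulVec_le b ψ (kφ / (2 * V))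
  have hc := hLeta.map_ofReal.re_dotProduct_nonneg c
  simp only [RCLike.re_to_complex] at hcs hc
  have hcross : kφ * (star b ⬝ᵥ LR.map (↑) *ᵥ ψ).re ≤
      V * (star b ⬝ᵥ LR.map (↑) *ᵥ b).re + kφ ^ 2 / (4 * V) * (star ψ ⬝ᵥ LR.map (↑) *ᵥ ψ).re := by
    have := mul_le_mul_of_nonneg_left hcs hV.le
    field_simp at this ⊢
    linarith
  linear_combination hbal + hcross + hc

theorem dissipation_eq_zero (h : ClosedLoopEigenEqns m e kw kv kd kdi LR Leta S V γ kφ μ a b c d)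
    (hm : ∀ i, 0 < m i) (he : ∀ i, 0 < e i) (hkw : ∀ i, 0 < kw i) (hkv : ∀ i, 0 < kv i)
    (hkd : ∀ i, 0 < kd i) (hLR : LR.PosSemidef) (hLRS : LR * (S * Sᵀ) = LR)
    (hLeta : Leta.PosSemidef) (hV : 0 < V) (hkφ : 0 < kφ) (hγ : kφ / (4 * V) < γ)
    (hμ : 0 ≤ μ.re) (hψ : S.map (↑) *ᵥ d = ψ) : a = 0 ∧ b = 0 ∧ LR.map (↑) *ᵥ ψ = 0 := by
  have hdiss := h.dissipation_le hm he hkw hkv hV hLR hLRS hLeta hψ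
  set H := (star ψ ⬝ᵥ LR.map (↑) *ᵥ ψ).re
  have hH : 0 ≤ H := by simpa using hLR.map_ofReal.re_dotProduct_nonneg ψ
  have hE : 0 ≤ ∑ i, (kw i / (kv i * m i) * ‖a i‖ ^ 2 + V / e i * ‖b i‖ ^ 2 + ‖c i‖ ^ 2) :=
    Finset.sum_nonneg fun i _ => by
      have := hkw i; have := hkv i; have := hm i; have := he i; positivity
  have hD i : 0 ≤ kw i * kd i / kv i * ‖a i‖ ^ 2 + ‖kw i * a i - kv i * b i‖ ^ 2 / kv i := by
    have := hkv i; have := hkw i; have := hkd i; positivity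
  have hsumD := Finset.sum_nonneg (s := Finset.univ) fun i _ => hD i
  have hEH := mul_nonneg hμ (add_nonneg hE (mul_nonneg hkφ.le hH))
  have hcoef : 0 < kφ * (γ - kφ / (4 * V)) := mul_pos hkφ (sub_pos.mpr hγ)
  have hcH := mul_nonneg hcoef.le hH
  have hH0 : H = 0 := by nlinarith
  have hD0 := (Finset.sum_eq_zero_iff_of_nonneg (s := Finset.univ) fun i _ => hD i).mp (by linarith)
  have hab i : a i = 0 ∧ b i = 0 := by
    have := hkw i; have := hkv i; have := hkd i
    obtain ⟨ha, hb⟩ := (add_eq_zero_iff_of_nonneg (by positivity) (by positivity)).mp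
      (hD0 i (Finset.mem_univ i))
    have ha : a i = 0 := by simpa [(hkw i).ne', (hkv i).ne', (hkd i).ne'] using ha
    exact ⟨ha, by simpa [ha, (hkv i).ne'] using hb⟩
  refine ⟨funext fun i => (hab i).1, funext fun i => (hab i).2, ?_⟩
  refine (hLR.map_ofReal.dotProduct_mulVec_zero_iff ψ).mp (Complex.ext hH0 ?_)
  simpa using hLR.map_ofReal.isHermitian.im_star_dotProduct_mulVec_self ψ

theorem eq_zero (h : ClosedLoopEigenEqns m e kw kv kd kdi LR Leta S V γ kφ μ a b c d)
    (hm : ∀ i, 0 < m i) (he : ∀ i, 0 < e i) (hkw : ∀ i, 0 < kw i) (hkv : ∀ i, 0 < kv i)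
    (hkd : ∀ i, 0 < kd i) (hkdi : ∀ i, 0 < kdi i) (hLR : IsConnLaplacian LR)
    (hLeta : Leta.PosSemidef) (hS : Sᵀ * S = 1) (hS1 : Sᵀ *ᵥ 1 = 0) (hV : 0 < V) (hkφ : 0 < kφ)
    (hγ : kφ / (4 * V) < γ) (hμ : 0 ≤ μ.re) : a = 0 ∧ b = 0 ∧ c = 0 ∧ d = 0 := by
  set ψ := S.map (↑) *ᵥ d with hψ
  obtain ⟨rfl, rfl, hw⟩ := h.dissipation_eq_zero hm he hkw hkv hkd hLR.1
    (mul_mul_transpose_eq_self hLR.2.1 hS hS1) hLeta hV hkφ hγ hμ hψ.symm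
  have hc i : c i = 0 := by
    have := h.omega_eq i
    simp only [← hψ, hw, Pi.zero_apply] at this
    simpa [(hm i).ne', (hkv i).ne', (hkw i).ne', (hkdi i).ne'] using this
  obtain ⟨z, hz⟩ := exists_eq_const_of_map_ofReal_mulVec_eq_zero hLR.2.2 hw
  refine ⟨rfl, rfl, funext hc, ?_⟩
  calc d = Sᵀ.map (↑) *ᵥ ψ := by rw [hψ, ← map_ofReal_mul_mulVec, hS, map_ofReal_one_mulVec]
    _ = 0 := by
      ext
      simp [hz, map_ofReal_mulVec_const, hS1]

end ClosedLoopEigenEqns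

theorem stmt_1_general {n : ℕ}
    (m e kw kv kd kdi : Fin n → ℝ)
    (hm : ∀ i, 0 < m i) (he : ∀ i, 0 < e i) (hkw : ∀ i, 0 < kw i)
    (hkv : ∀ i, 0 < kv i) (hkd : ∀ i, 0 < kd i) (hkdi : ∀ i, 0 < kdi i)
    (LR Leta Lphi : Matrix (Fin n) (Fin n) ℝ)
    (hLR : IsConnLaplacian LR) (hLeta : IsConnLaplacian Leta)
    (S : Matrix (Fin n) (Fin (n - 1)) ℝ)
    (hS : Sᵀ * S = 1) (hS1 : Sᵀ *ᵥ (fun _ => (1 : ℝ)) = 0)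
    (Vnom γ kphi : ℝ) (hVnom : 0 < Vnom) (hkphi : 0 < kphi)
    -- Assumption 1
    (hass1 : Lphi = kphi • LR)
    -- Assumption 2
    (hass2 : γ > kphi / (4 * Vnom))
    (A : Matrix (Idx n) (Idx n) ℝ)
    (hA : A = closedLoopA (Matrix.diagonal m) (Matrix.diagonal e)
      (Matrix.diagonal kw) (Matrix.diagonal kv) (Matrix.diagonal kd)
      (Matrix.diagonal kdi) LR Leta Lphi S Vnom γ) :
    ∀ μ ∈ spectrum ℂ (A.map (Complex.ofReal ·)), μ.re < 0 := by
  intro μ hμ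
  by_contra! hre
  obtain ⟨v, hv0, hv⟩ := exists_mulVec_eq_smul_of_mem_spectrum hμ
  subst hA hass1
  obtain ⟨a, b, c, d, rfl⟩ : ∃ a b c d, v = Sum.elim (Sum.elim a b) (Sum.elim c d) :=
    ⟨_, _, _, _, by ext ((i | i) | (i | i)) <;> rfl⟩
  have hv := closedLoopEigenEqns_of_mulVec_eq_smul (fun i => (hkw i).ne') (fun i => (hkv i).ne') hv
  obtain ⟨rfl, rfl, rfl, rfl⟩ :=
    hv.eq_zero hm he hkw hkv hkd hkdi hLR hLeta.1 hS hS1 hVnom hkphi hass2 hre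
  exact hv0 (by simp)

/-- Under Assumptions 1 and 2, the closed-loop matrix `A` is Hurwitz:
every eigenvalue of `A` (as a complex matrix) has negative real part. -/
theorem stmt_1 {n : ℕ} (hn : 2 ≤ n)
    (m e kw kv kd kdi : Fin n → ℝ)
    (hm : ∀ i, 0 < m i) (he : ∀ i, 0 < e i) (hkw : ∀ i, 0 < kw i)
    (hkv : ∀ i, 0 < kv i) (hkd : ∀ i, 0 < kd i) (hkdi : ∀ i, 0 < kdi i)
    (LR Leta Lphi : Matrix (Fin n) (Fin n) ℝ)
    (hLR : IsConnLaplacian LR) (hLeta : IsConnLaplacian Leta)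
    (hLphi : IsConnLaplacian Lphi)
    (S : Matrix (Fin n) (Fin (n - 1)) ℝ)
    (hS : Sᵀ * S = 1) (hS1 : Sᵀ *ᵥ (fun _ => (1 : ℝ)) = 0)
    (Vnom γ kphi : ℝ) (hVnom : 0 < Vnom) (hγ : 0 < γ) (hkphi : 0 < kphi)
    -- Assumption 1
    (hass1 : Lphi = kphi • LR)
    -- Assumption 2
    (hass2 : γ > kphi / (4 * Vnom))
    (A : Matrix (Idx n) (Idx n) ℝ)
    (hA : A = closedLoopA (Matrix.diagonal m) (Matrix.diagonal e)
      (Matrix.diagonal kw) (Matrix.diagonal kv) (Matrix.diagonal kd)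
      (Matrix.diagonal kdi) LR Leta Lphi S Vnom γ) :
    ∀ μ ∈ spectrum ℂ (A.map (Complex.ofReal ·)), μ.re < 0 :=
  stmt_1_general m e kw kv kd kdi hm he hkw hkv hkd hkdi LR Leta Lphi hLR hLeta S hS hS1 Vnom γ kphi
    hVnom hkphi hass1 hass2 A hA
end

section
/- The largest invariant set of the closed-loop dynamics contained in G = {(ω̄, V̄, η̄, φ̄) : ω̄ = 0, V̄ = 0, φ̄ = 0, η̄ ∈ span{1_n}} is the origin: every linear subspace U ⊆ ℝ^{3n+(n−1)} satisfying A·U ⊆ U and U ⊆ G equals {0}. In particular, for x = (0_n, 0_n, k·1_n, 0_{n−1}), the first (ω̄) block of A x equals −k·M K^V (K^ω)^{−1} K^{droop,I} 1_n, which vanishes if and only if k = 0. -/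
/-!
A vector of `G` has the form `x = (0, 0, k·1, 0)`, and the `ω̄`-block of `A x` is
`-B (k·1)` with `B = M K^V (K^ω)⁻¹ K^{droop,I}`. Since `B` is a product of invertible
diagonal matrices, this block vanishes only for `k = 0`; so an `A`-invariant subspace
inside `G` can only contain `0`.
-/

open Matrix Filter

namespace Matrix

variable {ι K : Type*} [Fintype ι] [DecidableEq ι] [Field K]

lemma isUnit_diagonal_of_ne_zero {v : ι → K} (hv : ∀ i, v i ≠ 0) : IsUnit (diagonal v) :=
  isUnit_diagonal.2 (Pi.isUnit_iff.2 fun i => (hv i).isUnit)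

lemma mulVec_const_eq_zero_iff [Nonempty ι] {B : Matrix ι ι K} (hB : IsUnit B) (k : K) :
    B *ᵥ (fun _ => k) = 0 ↔ k = 0 := by
  rw [← mulVec_zero B, (mulVec_injective_iff_isUnit.2 hB).eq_iff]
  exact ⟨fun h => congrFun h (Classical.arbitrary ι), fun h => h ▸ rfl⟩

end Matrix

lemma closedLoopA_mulVec_eta_omega {n : ℕ}
    (M E Kw KV Kd KdI LR Leta Lphi : Matrix (Fin n) (Fin n) ℝ)
    (S : Matrix (Fin n) (Fin (n - 1)) ℝ) (Vnom γ : ℝ) (η : Fin n → ℝ) :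
    (fun i => (closedLoopA M E Kw KV Kd KdI LR Leta Lphi S Vnom γ *ᵥ
        (Sum.elim (Sum.elim 0 0) (Sum.elim η 0) : Idx n → ℝ)) (Sum.inl (Sum.inl i)))
      = -((M * (KV * Kw⁻¹ * KdI)) *ᵥ η) := by
  funext i
  simp [closedLoopA, fromBlocks_mulVec, neg_mulVec]

lemma eq_sum_elim_of_blocks {n : ℕ} {x : Idx n → ℝ}
    (hω : ∀ i, x (Sum.inl (Sum.inl i)) = 0) (hV : ∀ i, x (Sum.inl (Sum.inr i)) = 0)
    (hφ : ∀ i, x (Sum.inr (Sum.inr i)) = 0) {k : ℝ}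
    (hη : ∀ i, x (Sum.inr (Sum.inl i)) = k) :
    x = (Sum.elim (Sum.elim 0 0) (Sum.elim (fun _ => k) 0) : Idx n → ℝ) := by
  funext j
  rcases j with (i | i) | (i | i)
  exacts [hω i, hV i, hη i, hφ i]

theorem stmt_6_general {n : ℕ} (hn : 2 ≤ n)
    (m kw kv kd kdi : Fin n → ℝ)
    (hm : ∀ i, 0 < m i) (hkw : ∀ i, 0 < kw i)
    (hkv : ∀ i, 0 < kv i) (hkdi : ∀ i, 0 < kdi i)
    (E : Matrix (Fin n) (Fin n) ℝ)
    (LR Leta Lphi : Matrix (Fin n) (Fin n) ℝ)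
    (S : Matrix (Fin n) (Fin (n - 1)) ℝ)
    (Vnom γ : ℝ)
    (A : Matrix (Idx n) (Idx n) ℝ)
    (hA : A = closedLoopA (Matrix.diagonal m) E
      (Matrix.diagonal kw) (Matrix.diagonal kv) (Matrix.diagonal kd)
      (Matrix.diagonal kdi) LR Leta Lphi S Vnom γ)
    (G : Set (Idx n → ℝ))
    (hG : G = {x : Idx n → ℝ |
      (∀ i, x (Sum.inl (Sum.inl i)) = 0) ∧
      (∀ i, x (Sum.inl (Sum.inr i)) = 0) ∧
      (∀ i, x (Sum.inr (Sum.inr i)) = 0) ∧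
      (∃ k : ℝ, ∀ i, x (Sum.inr (Sum.inl i)) = k)}) :
    (∀ U : Submodule ℝ (Idx n → ℝ),
        (∀ u ∈ U, A *ᵥ u ∈ U) → (U : Set (Idx n → ℝ)) ⊆ G → U = ⊥) ∧
    (∀ k : ℝ,
      ((fun i => (A *ᵥ (Sum.elim (Sum.elim 0 0)
          (Sum.elim (fun _ => k) 0) : Idx n → ℝ)) (Sum.inl (Sum.inl i)))
        = fun i => -k * ((Matrix.diagonal m * (Matrix.diagonal kv *
            (Matrix.diagonal kw)⁻¹ * Matrix.diagonal kdi)) *ᵥ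
            (fun _ => (1 : ℝ))) i) ∧
      ((fun i => (A *ᵥ (Sum.elim (Sum.elim 0 0)
          (Sum.elim (fun _ => k) 0) : Idx n → ℝ)) (Sum.inl (Sum.inl i)))
        = (0 : Fin n → ℝ) ↔ k = 0)) := by
  have : Nonempty (Fin n) := ⟨⟨0, by omega⟩⟩
  set B := diagonal m * (diagonal kv * (diagonal kw)⁻¹ * diagonal kdi)
  have hB : IsUnit B := by
    have hunit {v : Fin n → ℝ} (hv : ∀ i, 0 < v i) :=
      isUnit_diagonal_of_ne_zero fun i => (hv i).ne'
    exact (hunit hm).mul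
      (((hunit hkv).mul (isUnit_nonsing_inv_iff.2 (hunit hkw))).mul (hunit hkdi))
  have hω (k : ℝ) : (fun i => (A *ᵥ (Sum.elim (Sum.elim 0 0)
      (Sum.elim (fun _ => k) 0) : Idx n → ℝ)) (Sum.inl (Sum.inl i)))
        = -(B *ᵥ fun _ => k) := by
    subst hA
    exact closedLoopA_mulVec_eta_omega ..
  refine ⟨fun U hInv hSub => ?_, fun k => ⟨?_, ?_⟩⟩
  · subst hG
    refine (Submodule.eq_bot_iff U).2 fun u hu => ?_
    obtain ⟨hωu, hVu, hφu, k, hηu⟩ := hSub hu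
    rw [eq_sum_elim_of_blocks hωu hVu hφu hηu] at hu ⊢
    have hk : k = 0 := by
      rw [← mulVec_const_eq_zero_iff hB, ← neg_eq_zero, ← hω]
      exact funext (hSub (hInv _ hu)).1
    subst hk
    ext ((i | i) | (i | i)) <;> rfl
  · have hconst : (fun _ : Fin n => k) = k • fun _ => (1 : ℝ) := by
      funext; simp
    rw [hω, hconst, mulVec_smul]
    funext i
    simp
  · rw [hω, neg_eq_zero, mulVec_const_eq_zero_iff hB]

/-- The largest invariant set contained in
`G = {(ω̄, V̄, η̄, φ̄) : ω̄ = 0, V̄ = 0, φ̄ = 0, η̄ ∈ span{1ₙ}}` is the origin: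
any `A`-invariant linear subspace contained in `G` is trivial. In particular,
for `x = (0, 0, k·1ₙ, 0)` the `ω̄`-block of `A x` is
`−k · M K^V (K^ω)⁻¹ K^{droop,I} 1ₙ`, which vanishes iff `k = 0`. -/
theorem stmt_6 {n : ℕ} (hn : 2 ≤ n)
    (m c kw kv kd kdi : Fin n → ℝ)
    (hm : ∀ i, 0 < m i) (hc : ∀ i, 0 < c i) (hkw : ∀ i, 0 < kw i)
    (hkv : ∀ i, 0 < kv i) (hkd : ∀ i, 0 < kd i) (hkdi : ∀ i, 0 < kdi i)
    (E : Matrix (Fin n) (Fin n) ℝ) (hE : E = (Matrix.diagonal c)⁻¹)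
    (LR Leta Lphi : Matrix (Fin n) (Fin n) ℝ)
    (hLR : IsConnLaplacian LR) (hLeta : IsConnLaplacian Leta)
    (hLphi : IsConnLaplacian Lphi)
    (S : Matrix (Fin n) (Fin (n - 1)) ℝ)
    (hS : Sᵀ * S = 1) (hS1 : Sᵀ *ᵥ (fun _ => (1 : ℝ)) = 0)
    (Vnom γ : ℝ) (hVnom : 0 < Vnom) (hγ : 0 < γ)
    (A : Matrix (Idx n) (Idx n) ℝ)
    (hA : A = closedLoopA (Matrix.diagonal m) E
      (Matrix.diagonal kw) (Matrix.diagonal kv) (Matrix.diagonal kd)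
      (Matrix.diagonal kdi) LR Leta Lphi S Vnom γ)
    (G : Set (Idx n → ℝ))
    (hG : G = {x : Idx n → ℝ |
      (∀ i, x (Sum.inl (Sum.inl i)) = 0) ∧
      (∀ i, x (Sum.inl (Sum.inr i)) = 0) ∧
      (∀ i, x (Sum.inr (Sum.inr i)) = 0) ∧
      (∃ k : ℝ, ∀ i, x (Sum.inr (Sum.inl i)) = k)}) :
    (∀ U : Submodule ℝ (Idx n → ℝ),
        (∀ u ∈ U, A *ᵥ u ∈ U) → (U : Set (Idx n → ℝ)) ⊆ G → U = ⊥) ∧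
    (∀ k : ℝ,
      ((fun i => (A *ᵥ (Sum.elim (Sum.elim 0 0)
          (Sum.elim (fun _ => k) 0) : Idx n → ℝ)) (Sum.inl (Sum.inl i)))
        = fun i => -k * ((Matrix.diagonal m * (Matrix.diagonal kv *
            (Matrix.diagonal kw)⁻¹ * Matrix.diagonal kdi)) *ᵥ
            (fun _ => (1 : ℝ))) i) ∧
      ((fun i => (A *ᵥ (Sum.elim (Sum.elim 0 0)
          (Sum.elim (fun _ => k) 0) : Idx n → ℝ)) (Sum.inl (Sum.inl i)))
        = (0 : Fin n → ℝ) ↔ k = 0)) :=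
  stmt_6_general hn m kw kv kd kdi hm hkw hkv hkdi E LR Leta Lphi S Vnom γ A hA G hG
end

section
/- (Corollary 1, equilibrium characterization in the consensus limit.) Suppose x = (ω̂, V̂, η, φ'') is an equilibrium of the closed-loop dynamics, i.e., A x + (M P^m, 0, 0, 0) = 0 for a load vector P^m ∈ ℝ^n, and suppose in addition that Sᵀ ω̂ = 0 (the condition obtained in the limit ‖(K^ω)^{−1}K^V‖_∞ → 0). Then: (i) ω̂ = 0 (zero frequency deviations); (ii) η = k₂·1_n for some k₂ ∈ ℝ, and the generated power vector P^gen := −K^droop ω̂ − K^V (K^ω)^{−1} K^{droop,I} η satisfies F^P P^gen = −k₂·1_n where (F^P)^{−1} = K^V (K^ω)^{−1} K^{droop,I}, together with the power balance Σᵢ P^gen_i = −Σᵢ P^m_i (so P^gen satisfies the KKT condition of the generation-cost minimization); (iii) 1_nᵀ K^V V̂ = 0 (so V̂ satisfies the KKT condition of the voltage-cost minimization with F^V = K^V). -/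
open Matrix Filter

/-!
Since `Sᵀ ω̂ = 0` and the columns of `S` together with `1ₙ` span `ℝⁿ`, the frequency deviation
is a constant vector `a 1ₙ`. Summing the `η`-row `K^{droop,I} ω̂ = L_η η` annihilates the Laplacian
term (`1ₙᵀ L = 0`) and leaves `a ∑ K^{droop,I}_i = 0`, so `ω̂ = 0`. Then `η ∈ ker L_η` is constant,
the `φ''`-row gives `φ'' = 0`, and cancelling the invertible `M` and `E` from the first two rows
leaves `(F^P)⁻¹ η = K^V V̂ + P^m` and `(L_R + K^V / V^nom) V̂ = 0`; summing the latter gives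
`1ₙᵀ K^V V̂ = 0`, and with it the power balance.
-/

/-- `[S | 1]` has the left inverse `[Sᵀ; 1ᵀ / N]` (`N = card ι`); being square it is also a right
inverse, so `S Sᵀ + 1 1ᵀ / N = 1`. -/
theorem exists_eq_const_of_transpose_mulVec_eq_zero {ι κ : Type*} [Fintype ι] [Fintype κ]
    [DecidableEq ι] [DecidableEq κ] {S : Matrix ι κ ℝ}
    (hcard : Fintype.card κ + 1 = Fintype.card ι)
    (hS : Sᵀ * S = 1) (hS1 : Sᵀ *ᵥ (fun _ => 1) = 0) {v : ι → ℝ} (hv : Sᵀ *ᵥ v = 0) :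
    ∃ c : ℝ, v = fun _ => c := by
  set N : ℝ := (Fintype.card ι : ℝ)
  have hN : N ≠ 0 := by simp only [N, Nat.cast_ne_zero]; omega
  have hcol : ∀ k, ∑ i, S i k = 0 := fun k => by simpa [mulVec, dotProduct] using congrFun hS1 k
  set J : Matrix ι Unit ℝ := replicateCol Unit (fun _ => 1)
  set K : Matrix Unit ι ℝ := replicateRow Unit (fun _ => N⁻¹)
  have hRP : fromRows Sᵀ K * fromCols S J = 1 := by
    have hSJ : Sᵀ * J = 0 := by ext; simp [J, mul_apply, hcol]
    have hKS : K * S = 0 := by ext; simp [K, mul_apply, ← Finset.mul_sum, hcol]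
    have hKJ : K * J = 1 := by ext; simp [K, J, mul_apply, N, hN]
    rw [fromRows_mul_fromCols, hS, hSJ, hKS, hKJ, fromBlocks_one]
  have hPR : fromCols S J * fromRows Sᵀ K = 1 :=
    (mul_eq_one_comm_of_equiv (Fintype.equivOfCardEq (by simp [hcard]))).mpr hRP
  refine ⟨N⁻¹ * ∑ i, v i, ?_⟩
  calc v = fromCols S J *ᵥ (fromRows Sᵀ K *ᵥ v) := by rw [mulVec_mulVec, hPR, one_mulVec]
    _ = fun _ => N⁻¹ * ∑ i, v i := by
      rw [fromRows_mulVec, hv, fromCols_mulVec_sumElim, mulVec_zero, zero_add]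
      ext i; simp [J, K, mulVec, dotProduct, Finset.mul_sum]

theorem isUnit_diagonal_of_pos {ι : Type*} [Fintype ι] [DecidableEq ι] {d : ι → ℝ}
    (hd : ∀ i, 0 < d i) : IsUnit (diagonal d) :=
  isUnit_diagonal.mpr (Pi.isUnit_iff.mpr fun i => (hd i).ne'.isUnit)

theorem IsConnLaplacian.sum_mulVec {n : ℕ} {L : Matrix (Fin n) (Fin n) ℝ}
    (hL : IsConnLaplacian L) (w : Fin n → ℝ) : ∑ i, (L *ᵥ w) i = 0 := by
  obtain ⟨hpsd, h1, -⟩ := hL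
  have hsymm : Lᵀ = L := (isHermitian_iff_isSymm.mp hpsd.1).eq
  calc ∑ i, (L *ᵥ w) i = (fun _ => 1) ⬝ᵥ (L *ᵥ w) := by simp [dotProduct]
    _ = (Lᵀ *ᵥ fun _ => 1) ⬝ᵥ w := by rw [dotProduct_mulVec, mulVec_transpose]
    _ = 0 := by rw [hsymm, h1, zero_dotProduct]

theorem IsConnLaplacian.eq_zero_of_diagonal_mulVec_const_eq {n : ℕ} [NeZero n]
    {L : Matrix (Fin n) (Fin n) ℝ} (hL : IsConnLaplacian L) {d : Fin n → ℝ} (hd : ∀ i, 0 < d i)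
    {a : ℝ} {w : Fin n → ℝ} (h : diagonal d *ᵥ (fun _ => a) = L *ᵥ w) : a = 0 := by
  have hsum : (∑ i, d i) * a = 0 := by
    rw [Finset.sum_mul, ← hL.sum_mulVec w, ← h]
    simp [mulVec_diagonal]
  have hpos : 0 < ∑ i, d i := Finset.sum_pos (fun i _ => hd i) Finset.univ_nonempty
  exact (mul_eq_zero.mp hsum).resolve_left hpos.ne'

theorem IsConnLaplacian.sum_mul_eq_zero_of_add_smul_diagonal_mulVec_eq_zero {n : ℕ}
    {L : Matrix (Fin n) (Fin n) ℝ} (hL : IsConnLaplacian L) {d v : Fin n → ℝ} {t : ℝ} (ht : t ≠ 0)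
    (h : (L + t • diagonal d) *ᵥ v = 0) : ∑ i, d i * v i = 0 := by
  have hsum := congrArg (fun u => ∑ i, u i) h
  simp only [add_mulVec, smul_mulVec, Pi.add_apply, Pi.smul_apply, smul_eq_mul, mulVec_diagonal,
    Finset.sum_add_distrib, hL.sum_mulVec, ← Finset.mul_sum, Pi.zero_apply, Finset.sum_const_zero,
    zero_add] at hsum
  exact (mul_eq_zero.mp hsum).resolve_left ht

theorem closedLoopA_equilibrium_rows {n : ℕ}
    {M E Kw KV Kd KdI LR Leta Lphi : Matrix (Fin n) (Fin n) ℝ}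
    {S : Matrix (Fin n) (Fin (n - 1)) ℝ} {Vnom γ : ℝ} {Pm ω V η : Fin n → ℝ}
    {φ : Fin (n - 1) → ℝ}
    (h : closedLoopA M E Kw KV Kd KdI LR Leta Lphi S Vnom γ *ᵥ
        Sum.elim (Sum.elim ω V) (Sum.elim η φ) +
      (Sum.elim (Sum.elim (M *ᵥ Pm) 0) (Sum.elim 0 0) : Idx n → ℝ) = 0) :
    M *ᵥ (KV *ᵥ V - (Kd + Kw) *ᵥ ω - (KV * Kw⁻¹ * KdI) *ᵥ η - (Lphi * S) *ᵥ φ + Pm) = 0 ∧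
    E *ᵥ ((1 / Vnom) • (Kw *ᵥ ω + (Lphi * S) *ᵥ φ) - (LR + (1 / Vnom) • KV) *ᵥ V) = 0 ∧
    KdI *ᵥ ω = Leta *ᵥ η ∧
    (Sᵀ * KV⁻¹ * Kw) *ᵥ ω = γ • φ := by
  simp only [closedLoopA, fromBlocks_mulVec, Sum.elim_comp_inl, Sum.elim_comp_inr, funext_iff,
    Sum.forall, Pi.add_apply, Sum.elim_inl, Sum.elim_inr, Pi.zero_apply, Pi.sub_apply,
    Pi.neg_apply, Pi.smul_apply, smul_eq_mul, neg_mulVec, smul_mulVec, zero_mulVec, one_mulVec,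
    mulVec_add, mulVec_sub, mulVec_smul, mulVec_mulVec] at h ⊢
  obtain ⟨⟨h₁, h₂⟩, h₃, h₄⟩ := h
  exact ⟨fun i => by linear_combination h₁ i, fun i => by linear_combination h₂ i,
    fun i => by linear_combination h₃ i, fun i => by linear_combination h₄ i⟩

theorem stmt_17_general {n : ℕ} (hn : 2 ≤ n)
    (m c kw kv kd kdi : Fin n → ℝ)
    (hm : ∀ i, 0 < m i) (hc : ∀ i, 0 < c i)
    (hkdi : ∀ i, 0 < kdi i)
    (E : Matrix (Fin n) (Fin n) ℝ) (hE : E = (Matrix.diagonal c)⁻¹)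
    (LR Leta Lphi : Matrix (Fin n) (Fin n) ℝ)
    (hLR : IsConnLaplacian LR) (hLeta : IsConnLaplacian Leta)
    (S : Matrix (Fin n) (Fin (n - 1)) ℝ)
    (hS : Sᵀ * S = 1) (hS1 : Sᵀ *ᵥ (fun _ => (1 : ℝ)) = 0)
    (Vnom γ : ℝ) (hVnom : 0 < Vnom) (hγ : 0 < γ)
    (A : Matrix (Idx n) (Idx n) ℝ)
    (hA : A = closedLoopA (Matrix.diagonal m) E
      (Matrix.diagonal kw) (Matrix.diagonal kv) (Matrix.diagonal kd)
      (Matrix.diagonal kdi) LR Leta Lphi S Vnom γ)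
    -- the diagonal generation-cost matrix `F^P`, with `(F^P)⁻¹ = K^V (K^ω)⁻¹ K^{droop,I}`
    (FP : Matrix (Fin n) (Fin n) ℝ)
    (hFP : FP * (Matrix.diagonal kv * (Matrix.diagonal kw)⁻¹ *
      Matrix.diagonal kdi) = 1)
    -- `x = (ω̂, V̂, η, φ'')` is an equilibrium for the load vector `P^m`
    (Pm : Fin n → ℝ) (x : Idx n → ℝ)
    (hx : A *ᵥ x + (Sum.elim (Sum.elim ((Matrix.diagonal m) *ᵥ Pm) 0)
      (Sum.elim 0 0) : Idx n → ℝ) = 0)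
    -- the consensus-limit condition `Sᵀ ω̂ = 0`
    (hlim : Sᵀ *ᵥ (fun i => x (Sum.inl (Sum.inl i))) = 0) :
    -- (i) zero frequency deviations
    (∀ i, x (Sum.inl (Sum.inl i)) = 0) ∧
    -- (ii) `η = k₂ 1ₙ`, KKT condition and power balance for `P^gen`
    (∃ k₂ : ℝ, (∀ i, x (Sum.inr (Sum.inl i)) = k₂) ∧
      (FP *ᵥ
        (-((Matrix.diagonal kd) *ᵥ (fun i => x (Sum.inl (Sum.inl i)))) -
          ((Matrix.diagonal kv * (Matrix.diagonal kw)⁻¹ *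
            Matrix.diagonal kdi) *ᵥ (fun i => x (Sum.inr (Sum.inl i)))))
        = fun _ => -k₂) ∧
      (∑ i, (-((Matrix.diagonal kd) *ᵥ (fun i => x (Sum.inl (Sum.inl i)))) -
          ((Matrix.diagonal kv * (Matrix.diagonal kw)⁻¹ *
            Matrix.diagonal kdi) *ᵥ (fun i => x (Sum.inr (Sum.inl i))))) i
        = -∑ i, Pm i)) ∧
    -- (iii) `1ₙᵀ K^V V̂ = 0`
    (∑ i, kv i * x (Sum.inl (Sum.inr i)) = 0) := by
  set ω : Fin n → ℝ := fun i => x (Sum.inl (Sum.inl i))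
  set V : Fin n → ℝ := fun i => x (Sum.inl (Sum.inr i))
  set η : Fin n → ℝ := fun i => x (Sum.inr (Sum.inl i))
  set φ : Fin (n - 1) → ℝ := fun i => x (Sum.inr (Sum.inr i))
  have hxblocks : x = Sum.elim (Sum.elim ω V) (Sum.elim η φ) := by
    ext ((i | i) | (i | i)) <;> rfl
  obtain ⟨row₁, row₂, row₃, row₄⟩ := closedLoopA_equilibrium_rows (hA ▸ hxblocks ▸ hx)
  have : NeZero n := ⟨by omega⟩
  obtain ⟨a, hωa⟩ := exists_eq_const_of_transpose_mulVec_eq_zero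
    (by simp only [Fintype.card_fin]; omega) hS hS1 hlim
  have ha : a = 0 := hLeta.eq_zero_of_diagonal_mulVec_const_eq hkdi (hωa ▸ row₃)
  have hω : ω = 0 := by rw [hωa, ha]; rfl
  obtain ⟨k₂, hη⟩ := hLeta.2.2 η (by simpa [hω] using row₃.symm)
  have hφ : φ = 0 := by simpa [hω, hγ.ne'] using row₄.symm
  have hMinj := mulVec_injective_of_isUnit (isUnit_diagonal_of_pos hm)
  have hEinj :=
    mulVec_injective_of_isUnit (hE ▸ isUnit_nonsing_inv_iff.mpr (isUnit_diagonal_of_pos hc))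
  have hbalance : (diagonal kv * (diagonal kw)⁻¹ * diagonal kdi) *ᵥ η = diagonal kv *ᵥ V + Pm := by
    have := (hMinj.eq_iff' (mulVec_zero _)).mp row₁
    simp only [hω, hφ, mulVec_zero, sub_zero] at this
    linear_combination -this
  have hV : ∑ i, kv i * V i = 0 := by
    refine hLR.sum_mul_eq_zero_of_add_smul_diagonal_mulVec_eq_zero (one_div_ne_zero hVnom.ne') ?_
    have := (hEinj.eq_iff' (mulVec_zero _)).mp row₂
    simpa only [hω, hφ, mulVec_zero, add_zero, smul_zero, zero_sub, neg_eq_zero] using this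
  refine ⟨congrFun hω, ⟨k₂, congrFun hη, ?_, ?_⟩, hV⟩
  · rw [hω, mulVec_zero, neg_zero, zero_sub, mulVec_neg, mulVec_mulVec, hFP, one_mulVec, hη]
    rfl
  · simp [hω, hbalance, mulVec_diagonal, Finset.sum_add_distrib, hV]

/-- Corollary 1 (equilibrium characterization in the consensus limit):
at an equilibrium of the closed-loop dynamics with `Sᵀ ω̂ = 0`, the frequency
deviations vanish, `η = k₂ 1ₙ`, the generated power
`P^gen = −K^droop ω̂ − K^V (K^ω)⁻¹ K^{droop,I} η` satisfies the KKT condition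
`F^P P^gen = −k₂ 1ₙ` with power balance `∑ P^gen = −∑ P^m`, and
`1ₙᵀ K^V V̂ = 0`. -/
theorem stmt_17 {n : ℕ} (hn : 2 ≤ n)
    (m c kw kv kd kdi : Fin n → ℝ)
    (hm : ∀ i, 0 < m i) (hc : ∀ i, 0 < c i) (hkw : ∀ i, 0 < kw i)
    (hkv : ∀ i, 0 < kv i) (hkd : ∀ i, 0 < kd i) (hkdi : ∀ i, 0 < kdi i)
    (E : Matrix (Fin n) (Fin n) ℝ) (hE : E = (Matrix.diagonal c)⁻¹)
    (LR Leta Lphi : Matrix (Fin n) (Fin n) ℝ)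
    (hLR : IsConnLaplacian LR) (hLeta : IsConnLaplacian Leta)
    (hLphi : IsConnLaplacian Lphi)
    (S : Matrix (Fin n) (Fin (n - 1)) ℝ)
    (hS : Sᵀ * S = 1) (hS1 : Sᵀ *ᵥ (fun _ => (1 : ℝ)) = 0)
    (Vnom γ : ℝ) (hVnom : 0 < Vnom) (hγ : 0 < γ)
    (A : Matrix (Idx n) (Idx n) ℝ)
    (hA : A = closedLoopA (Matrix.diagonal m) E
      (Matrix.diagonal kw) (Matrix.diagonal kv) (Matrix.diagonal kd)
      (Matrix.diagonal kdi) LR Leta Lphi S Vnom γ)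
    -- the diagonal generation-cost matrix `F^P`, with `(F^P)⁻¹ = K^V (K^ω)⁻¹ K^{droop,I}`
    (FP : Matrix (Fin n) (Fin n) ℝ)
    (hFP : FP * (Matrix.diagonal kv * (Matrix.diagonal kw)⁻¹ *
      Matrix.diagonal kdi) = 1)
    -- `x = (ω̂, V̂, η, φ'')` is an equilibrium for the load vector `P^m`
    (Pm : Fin n → ℝ) (x : Idx n → ℝ)
    (hx : A *ᵥ x + (Sum.elim (Sum.elim ((Matrix.diagonal m) *ᵥ Pm) 0)
      (Sum.elim 0 0) : Idx n → ℝ) = 0)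
    -- the consensus-limit condition `Sᵀ ω̂ = 0`
    (hlim : Sᵀ *ᵥ (fun i => x (Sum.inl (Sum.inl i))) = 0) :
    -- (i) zero frequency deviations
    (∀ i, x (Sum.inl (Sum.inl i)) = 0) ∧
    -- (ii) `η = k₂ 1ₙ`, KKT condition and power balance for `P^gen`
    (∃ k₂ : ℝ, (∀ i, x (Sum.inr (Sum.inl i)) = k₂) ∧
      (FP *ᵥ
        (-((Matrix.diagonal kd) *ᵥ (fun i => x (Sum.inl (Sum.inl i)))) -
          ((Matrix.diagonal kv * (Matrix.diagonal kw)⁻¹ *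
            Matrix.diagonal kdi) *ᵥ (fun i => x (Sum.inr (Sum.inl i)))))
        = fun _ => -k₂) ∧
      (∑ i, (-((Matrix.diagonal kd) *ᵥ (fun i => x (Sum.inl (Sum.inl i)))) -
          ((Matrix.diagonal kv * (Matrix.diagonal kw)⁻¹ *
            Matrix.diagonal kdi) *ᵥ (fun i => x (Sum.inr (Sum.inl i))))) i
        = -∑ i, Pm i)) ∧
    -- (iii) `1ₙᵀ K^V V̂ = 0`
    (∑ i, kv i * x (Sum.inl (Sum.inr i)) = 0) :=
  stmt_17_general hn m c kw kv kd kdi hm hc hkdi E hE LR Leta Lphi hLR hLeta S hS hS1 Vnom γ hVnom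
    hγ A hA FP hFP Pm x hx hlim
end
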